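/- arXiv:0903.0090 — 10 statements merged into one kernel-verified Lean document; each statement's English description precedes it below -/
import Mathlib

section
/- Let A be an n×n complex matrix, x,y ∈ ℂⁿ, z ∈ ℂ. The block matrix B = [[A, x],[y*, z]] of size (n+1)×(n+1) is normal if and only if A*A − AA* = xx* − yy* and (A − zI)* x = (A − zI) y. -/
/-!
Write `B = [[A, X], [Yᴴ, Z]]`. Comparing `BᴴB` and `BBᴴ` block by block gives four equations. The
lower-left one is the conjugate transpose of the upper-right one, and when the corner `Z` is `1 × 1`
the lower-right one is the trace of the upper-left one, since `tr (AᴴA) = tr (AAᴴ)`. So normality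
amounts to the upper-left equation `AᴴA - AAᴴ = XXᴴ - YYᴴ` and the upper-right equation
`AᴴX + YZ = AY + XZᴴ`, which for `Z = z` is `(A - z)ᴴ x = (A - z) y`.
-/

open Matrix

/-- The `(n+1)×(n+1)` block matrix `[[A, x],[y*, z]]`. -/
def completion {n : ℕ} (A : Matrix (Fin n) (Fin n) ℂ) (x y : Fin n → ℂ) (z : ℂ) :
    Matrix (Fin n ⊕ Fin 1) (Fin n ⊕ Fin 1) ℂ :=
  Matrix.fromBlocks A (Matrix.of fun i (_ : Fin 1) => x i)
    (Matrix.of fun (_ : Fin 1) j => star (y j)) (Matrix.of fun _ _ => z)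

namespace Matrix

variable {α m k : Type*} [Fintype m] [Fintype k]

theorem isStarNormal_iff_conjTranspose_mul_self [Mul α] [AddCommMonoid α] [Star α]
    (M : Matrix m m α) : IsStarNormal M ↔ Mᴴ * M = M * Mᴴ := by
  rw [isStarNormal_iff, commute_iff_eq, star_eq_conjTranspose]

theorem eq_of_trace_eq_of_unique [Unique k] [AddCommMonoid α] {M N : Matrix k k α}
    (h : trace M = trace N) : M = N := by
  ext i j
  rw [Subsingleton.elim i default, Subsingleton.elim j default]
  simpa [trace] using h

variable [CommRing α] [StarRing α]

theorem conjTranspose_mul_add_eq_of_unique [Unique k] {A : Matrix m m α} {X Y : Matrix m k α}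
    (Z : Matrix k k α) (h : Aᴴ * A - A * Aᴴ = X * Xᴴ - Y * Yᴴ) :
    Xᴴ * X + Zᴴ * Z = Yᴴ * Y + Z * Zᴴ := by
  refine eq_of_trace_eq_of_unique ?_
  have htrace := congrArg trace h
  simp only [trace_sub, trace_mul_comm Aᴴ A] at htrace
  simp only [trace_add, trace_mul_comm Xᴴ X, trace_mul_comm Yᴴ Y, trace_mul_comm Zᴴ Z]
  linear_combination -htrace

theorem isStarNormal_fromBlocks_iff [Unique k] (A : Matrix m m α) (X Y : Matrix m k α)
    (Z : Matrix k k α) :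
    IsStarNormal (fromBlocks A X Yᴴ Z) ↔
      Aᴴ * A - A * Aᴴ = X * Xᴴ - Y * Yᴴ ∧ Aᴴ * X + Y * Z = A * Y + X * Zᴴ := by
  rw [isStarNormal_iff_conjTranspose_mul_self, fromBlocks_conjTranspose,
    conjTranspose_conjTranspose, fromBlocks_multiply, fromBlocks_multiply, fromBlocks_inj]
  have hupper : Aᴴ * A + Y * Yᴴ = A * Aᴴ + X * Xᴴ ↔ Aᴴ * A - A * Aᴴ = X * Xᴴ - Y * Yᴴ := by
    rw [sub_eq_sub_iff_add_eq_add, add_comm (X * Xᴴ)]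
  have hlower : Xᴴ * A + Zᴴ * Yᴴ = Yᴴ * Aᴴ + Z * Xᴴ ↔ Aᴴ * X + Y * Z = A * Y + X * Zᴴ := by
    rw [← conjTranspose_inj]
    simp only [conjTranspose_add, conjTranspose_mul, conjTranspose_conjTranspose]
  rw [hupper, hlower]
  exact ⟨fun h => ⟨h.1, h.2.1⟩,
    fun h => ⟨h.1, h.2, h.2, conjTranspose_mul_add_eq_of_unique Z h.1⟩⟩

end Matrix

theorem completion_eq_fromBlocks {n : ℕ} (A : Matrix (Fin n) (Fin n) ℂ) (x y : Fin n → ℂ)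
    (z : ℂ) :
    completion A x y z =
      fromBlocks A (replicateCol (Fin 1) x) (replicateCol (Fin 1) y)ᴴ (z • 1) := by
  rw [completion, conjTranspose_replicateCol, smul_one_eq_diagonal]
  congr
  ext i j
  fin_cases i; fin_cases j; rfl

theorem stmt1 (n : ℕ) (A : Matrix (Fin n) (Fin n) ℂ) (x y : Fin n → ℂ) (z : ℂ) :
    ((completion A x y z)ᴴ * completion A x y z
        = completion A x y z * (completion A x y z)ᴴ) ↔
      (Aᴴ * A - A * Aᴴ = vecMulVec x (star x) - vecMulVec y (star y) ∧
        (A - z • (1 : Matrix (Fin n) (Fin n) ℂ))ᴴ *ᵥ x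
          = (A - z • (1 : Matrix (Fin n) (Fin n) ℂ)) *ᵥ y) := by
  rw [← isStarNormal_iff_conjTranspose_mul_self, completion_eq_fromBlocks,
    isStarNormal_fromBlocks_iff, vecMulVec_eq (Fin 1), vecMulVec_eq (Fin 1),
    conjTranspose_replicateCol, conjTranspose_replicateCol]
  refine and_congr_right fun _ => ?_
  rw [← replicateCol_inj (ι := Fin 1), replicateCol_mulVec, replicateCol_mulVec]
  simp only [conjTranspose_sub, conjTranspose_smul, conjTranspose_one, Matrix.sub_mul,
    Matrix.smul_mul, Matrix.one_mul, Matrix.mul_smul, Matrix.mul_one]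
  rw [sub_eq_sub_iff_add_eq_add]
end

section
/- If an n×n complex matrix A has a normal completion B = [[A, x],[y*, z]] of size (n+1)×(n+1) with x and y linearly dependent, then A is normal. -/
open Matrix

theorem stmt3 (n : ℕ) (A : Matrix (Fin n) (Fin n) ℂ) (x y : Fin n → ℂ) (z : ℂ)
    (hB : (completion A x y z)ᴴ * completion A x y z
        = completion A x y z * (completion A x y z)ᴴ)
    (hdep : ¬ LinearIndependent ℂ ![x, y]) :
    Aᴴ * A = A * Aᴴ := by
  have hE : ∀ i j, (Aᴴ * A) i j + y i * star (y j)
      = (A * Aᴴ) i j + x i * star (x j) := by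
    intro i j
    have h := congrFun (congrFun hB (Sum.inl i)) (Sum.inl j)
    simpa [completion, mul_apply, Fintype.sum_sum_type, conjTranspose_apply,
      fromBlocks, mul_comm] using h
  have htr : ∑ i, y i * star (y i) = ∑ i, x i * star (x i) := by
    have h1 : ∑ i, ((Aᴴ * A) i i + y i * star (y i))
        = ∑ i, ((A * Aᴴ) i i + x i * star (x i)) := by
      exact Finset.sum_congr rfl fun i _ => hE i i
    have h2 : (Aᴴ * A).trace = (A * Aᴴ).trace := Matrix.trace_mul_comm _ _
    simp only [Matrix.trace, Matrix.diag] at h2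
    rw [Finset.sum_add_distrib, Finset.sum_add_distrib, h2] at h1
    exact add_left_cancel h1
  have key : ∀ i j, x i * star (x j) = y i * star (y j) := by
    have hsum : ∀ v : Fin n → ℂ, ∑ i, v i * star (v i)
        = ((∑ i, Complex.normSq (v i) : ℝ) : ℂ) := by
      intro v
      push_cast
      exact Finset.sum_congr rfl fun i _ => (Complex.mul_conj (v i)).symm ▸ rfl
    rw [linearIndependent_fin2] at hdep
    push_neg at hdep
    simp only [Matrix.cons_val_one, Matrix.head_cons, Matrix.cons_val_zero] at hdep
    by_cases hY : y = 0
    · -- y = 0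
      have hy0 : y = 0 := hY
      intro i j
      have h0 : ∑ i, Complex.normSq (x i) = 0 := by
        have h := htr
        rw [hy0, hsum x] at h
        simp at h
        exact_mod_cast h.symm
      have hx0 : ∀ i, x i = 0 := by
        intro i
        have := (Finset.sum_eq_zero_iff_of_nonneg
          (fun i _ => Complex.normSq_nonneg (x i))).mp h0 i (Finset.mem_univ i)
        exact Complex.normSq_eq_zero.mp this
      simp [hx0, hy0]
    · -- x = a • y
      obtain ⟨a, ha⟩ := hdep hY
      have hx : ∀ i, x i = a * y i := fun i => (congrFun ha i).symm
      have hS : ((Complex.normSq a : ℝ) : ℂ) * ∑ i, y i * star (y i)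
          = ∑ i, y i * star (y i) := by
        calc ((Complex.normSq a : ℝ) : ℂ) * ∑ i, y i * star (y i)
            = ∑ i, x i * star (x i) := by
              rw [Finset.mul_sum]
              refine Finset.sum_congr rfl fun i _ => ?_
              rw [hx i]
              simp [← Complex.mul_conj]
              ring
          _ = ∑ i, y i * star (y i) := htr.symm
      by_cases hS0 : (∑ i, Complex.normSq (y i) : ℝ) = 0
      · have hy0 : ∀ i, y i = 0 := by
          intro i
          have := (Finset.sum_eq_zero_iff_of_nonneg
            (fun i _ => Complex.normSq_nonneg (y i))).mp hS0 i (Finset.mem_univ i)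
          exact Complex.normSq_eq_zero.mp this
        intro i j
        simp [hx, hy0]
      · have ha1 : Complex.normSq a = 1 := by
          rw [hsum y] at hS
          have : (((Complex.normSq a - 1 : ℝ)) : ℂ)
              * ((∑ i, Complex.normSq (y i) : ℝ) : ℂ) = 0 := by
            push_cast
            push_cast at hS
            ring_nf
            ring_nf at hS
            linear_combination hS
          rcases mul_eq_zero.mp this with h | h
          · have : (Complex.normSq a - 1 : ℝ) = 0 := by exact_mod_cast h
            linarith
          · exact absurd (by exact_mod_cast h) hS0
        intro i j
        rw [hx i, hx j]
        have haa : a * star a = 1 := by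
          simp only [RCLike.star_def, Complex.mul_conj, ha1]
          norm_num
        calc a * y i * star (a * y j)
            = (a * star a) * (y i * star (y j)) := by rw [star_mul']; ring
          _ = y i * star (y j) := by rw [haa, one_mul]
  ext i j
  have := hE i j
  rw [key i j] at this
  exact add_right_cancel this
end

section
/- An n×n complex matrix A which is not normal has normal defect 1 (i.e., admits a normal completion of size (n+1)×(n+1)) if and only if there exist an n×n contraction C, a diagonal matrix D ∈ ℂ^{n×n}, and a scalar μ ∈ ℂ such that A = C D C* + μ I, where C is the upper-left n×n block of some unitary (n+1)×(n+1) matrix. -/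
/-!
A normal completion `B` of `A` is unitarily diagonalisable, `B = U diag(d) U*`. If `C` and `c` are
the top blocks of `U` and `λ` is the last entry of `d`, the top-left block of `B` is
`C diag(d₁) C* + λ c c*`, and `C C* + c c* = 1` turns this into `C (diag(d₁) - λ) C* + λ`.
Conversely, if `U` is a unitary completion of `C`, then `U diag(D + μ, μ) U*` is a normal
completion of `C D C* + μ`.
-/

open Matrix Module.End Unitary
open scoped ComplexStarModule

theorem LinearMap.IsSymmetric.exists_orthonormalBasis_eigenvectors_of_commute
    {𝕜 E : Type*} [RCLike 𝕜] [NormedAddCommGroup E] [InnerProductSpace 𝕜 E]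
    [FiniteDimensional 𝕜 E] {S T : E →ₗ[𝕜] E} (hS : S.IsSymmetric) (hT : T.IsSymmetric)
    (hST : Commute S T) {N : ℕ} (hN : Module.finrank 𝕜 E = N) :
    ∃ b : OrthonormalBasis (Fin N) 𝕜 E,
      ∀ j, ∃ α γ : 𝕜, S (b j) = α • b j ∧ T (b j) = γ • b j := by
  classical
  set V : 𝕜 × 𝕜 → Submodule 𝕜 E := fun i => eigenspace S i.2 ⊓ eigenspace T i.1
  obtain ⟨hind, hsup⟩ := (DirectSum.isInternal_submodule_iff_iSupIndep_and_iSup_eq_top V).mp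
    (hS.directSum_isInternal_of_commute hT hST)
  have : Fintype {i // V i ≠ ⊥} := hind.fintypeNeBotOfFiniteDimensional
  have hV : DirectSum.IsInternal fun i : {i // V i ≠ ⊥} => V i :=
    DirectSum.isInternal_submodule_of_iSupIndep_of_iSup_eq_top
      (hind.comp Subtype.val_injective) (by rw [iSup_ne_bot_subtype, hsup])
  have hVorth : OrthogonalFamily 𝕜 (fun i : {i // V i ≠ ⊥} => V i) fun i => (V i).subtypeₗᵢ :=
    (hS.orthogonalFamily_eigenspace_inf_eigenspace hT).comp Subtype.val_injective
  refine ⟨hV.subordinateOrthonormalBasis hN hVorth, fun j => ?_⟩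
  obtain ⟨hjS, hjT⟩ := hV.subordinateOrthonormalBasis_subordinate hN j hVorth
  exact ⟨_, _, mem_eigenspace_iff.mp hjS, mem_eigenspace_iff.mp hjT⟩

namespace Matrix

variable {𝕜 m : Type*} [RCLike 𝕜] [Fintype m] [DecidableEq m]

theorem exists_unitary_eq_mul_diagonal_mul_star_of_orthonormalBasis {M : Matrix m m 𝕜}
    (b : OrthonormalBasis m 𝕜 (EuclideanSpace 𝕜 m)) (d : m → 𝕜)
    (hb : ∀ j, M *ᵥ b j = d j • b j) :
    ∃ U ∈ unitaryGroup m 𝕜, M = U * diagonal d * star U := by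
  set U := (EuclideanSpace.basisFun m 𝕜).toBasis.toMatrix b.toBasis
  have hU : U ∈ unitaryGroup m 𝕜 :=
    (EuclideanSpace.basisFun m 𝕜).toMatrix_orthonormalBasis_mem_unitary b
  have hMU : M * U = U * diagonal d := by
    ext i j
    rw [mul_diagonal, mul_comm]
    exact congrFun (hb j) i
  refine ⟨U, hU, ?_⟩
  rw [← hMU, mul_assoc, mem_unitaryGroup_iff.mp hU, mul_one]

theorem exists_unitary_eq_mul_diagonal_mul_star (M : Matrix m m ℂ) [IsStarNormal M] :
    ∃ U ∈ unitaryGroup m ℂ, ∃ d : m → ℂ, M = U * diagonal d * star U := by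
  have hsymm (X : selfAdjoint (Matrix m m ℂ)) : (toEuclideanLin (X : Matrix m m ℂ)).IsSymmetric :=
    isSymmetric_toEuclideanLin_iff.mpr X.2
  have hcomm :
      Commute (toEuclideanLin (ℜ M : Matrix m m ℂ)) (toEuclideanLin (ℑ M : Matrix m m ℂ)) :=
    (Commute.realPart_imaginaryPart M).map (toLpLinAlgEquiv 2 : Matrix m m ℂ ≃ₐ[ℂ] _)
  obtain ⟨b, hb⟩ := (hsymm (ℜ M)).exists_orthonormalBasis_eigenvectors_of_commute (hsymm (ℑ M))
    hcomm finrank_euclideanSpace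
  choose α γ hα hγ using hb
  let e : Fin (Fintype.card m) ≃ m := Fintype.equivOfCardEq (Fintype.card_fin _)
  have hmulVec (X : Matrix m m ℂ) (c : ℂ) (v : EuclideanSpace ℂ m)
      (h : toEuclideanLin X v = c • v) : X *ᵥ v = c • v := by
    simpa using congr(WithLp.ofLp $h)
  obtain ⟨U, hU, hMU⟩ := exists_unitary_eq_mul_diagonal_mul_star_of_orthonormalBasis (M := M)
    (b.reindex e) (fun j => α (e.symm j) + Complex.I * γ (e.symm j)) fun j => by
      conv_lhs => rw [← realPart_add_I_smul_imaginaryPart M]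
      rw [OrthonormalBasis.reindex_apply, add_mulVec, smul_mulVec, hmulVec _ _ _ (hα _),
        hmulVec _ _ _ (hγ _), smul_smul, ← add_smul]
  exact ⟨U, hU, _, hMU⟩

theorem isStarNormal_mul_diagonal_mul_star {R : Type*} [CommRing R] [StarRing R]
    {U : Matrix m m R} (hU : U ∈ unitaryGroup m R) (d : m → R) :
    IsStarNormal (U * diagonal d * star U) :=
  have : IsStarNormal (diagonal d) :=
    ⟨by rw [star_eq_conjTranspose, diagonal_conjTranspose]; exact commute_diagonal _ _⟩
  IsStarNormal.map (conjStarAlgAut R _ ⟨U, hU⟩) (diagonal d)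

theorem star_dotProduct_self_eq_sum_normSq {ι : Type*} [Fintype ι] (x : ι → ℂ) :
    star x ⬝ᵥ x = ((∑ i, Complex.normSq (x i) : ℝ) : ℂ) := by
  push_cast
  exact Finset.sum_congr rfl fun i _ => Complex.normSq_eq_conj_mul_self.symm

section Blocks

variable {R p q : Type*} [CommRing R] [StarRing R] [Fintype p] [Fintype q] [DecidableEq p]
  [DecidableEq q] {U : Matrix (p ⊕ q) (p ⊕ q) R}

theorem toBlocks₁₁_mul_conjTranspose_add_toBlocks₁₂_mul_conjTranspose (hU : U * Uᴴ = 1) :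
    U.toBlocks₁₁ * U.toBlocks₁₁ᴴ + U.toBlocks₁₂ * U.toBlocks₁₂ᴴ = 1 := by
  rw [← fromBlocks_toBlocks U, fromBlocks_conjTranspose, fromBlocks_multiply,
    ← fromBlocks_one] at hU
  exact congr(toBlocks₁₁ $hU)

theorem toBlocks₁₁_mul_diagonal_mul_conjTranspose [Unique q] (hU : U * Uᴴ = 1)
    (d : p ⊕ q → R) :
    (U * diagonal d * Uᴴ).toBlocks₁₁ =
      U.toBlocks₁₁ * diagonal (fun i => d (.inl i) - d (.inr default)) * U.toBlocks₁₁ᴴ +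
        d (.inr default) • 1 := by
  set μ := d (.inr default)
  have hd : diagonal d = fromBlocks (diagonal (d ∘ .inl)) 0 0 (μ • 1) := by
    rw [smul_one_eq_diagonal, fromBlocks_diagonal]
    congr
    ext (i | i)
    · rfl
    · simp [μ, Subsingleton.elim i default]
  have h := toBlocks₁₁_mul_conjTranspose_add_toBlocks₁₂_mul_conjTranspose hU
  rw [hd]
  conv_lhs => rw [← fromBlocks_toBlocks U, fromBlocks_conjTranspose, fromBlocks_multiply,
    fromBlocks_multiply]
  have hsub : diagonal (fun i => d (.inl i) - μ) = diagonal (d ∘ .inl) - μ • 1 := by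
    rw [smul_one_eq_diagonal, diagonal_sub]
    rfl
  simp only [toBlocks_fromBlocks₁₁, Matrix.mul_zero, add_zero, zero_add, hsub,
    Matrix.mul_sub, Matrix.sub_mul, Matrix.mul_smul, Matrix.smul_mul, Matrix.mul_one]
  rw [← h, smul_add]
  abel

theorem sum_normSq_toBlocks₁₁_mulVec_le {U : Matrix (p ⊕ q) (p ⊕ q) ℂ} (hU : Uᴴ * U = 1)
    (v : p → ℂ) : ∑ i, Complex.normSq ((U.toBlocks₁₁ *ᵥ v) i) ≤ ∑ i, Complex.normSq (v i) := by
  set w : p ⊕ q → ℂ := Sum.elim v 0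
  have hUw : ∑ j, Complex.normSq ((U *ᵥ w) j) = ∑ j, Complex.normSq (w j) := by
    have : star (U *ᵥ w) ⬝ᵥ (U *ᵥ w) = star w ⬝ᵥ w := by
      rw [star_mulVec, dotProduct_mulVec, vecMul_vecMul, hU, vecMul_one]
    rw [star_dotProduct_self_eq_sum_normSq, star_dotProduct_self_eq_sum_normSq] at this
    exact_mod_cast this
  have hUw_inl (i : p) : (U *ᵥ w) (.inl i) = (U.toBlocks₁₁ *ᵥ v) i := by
    simp [w, mulVec, dotProduct, Fintype.sum_sum_type, toBlocks₁₁]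
  calc ∑ i, Complex.normSq ((U.toBlocks₁₁ *ᵥ v) i)
      ≤ ∑ j, Complex.normSq ((U *ᵥ w) j) := by
        simp only [Fintype.sum_sum_type, hUw_inl]
        exact le_add_of_nonneg_right (Finset.sum_nonneg fun _ _ => Complex.normSq_nonneg _)
    _ = ∑ i, Complex.normSq (v i) := by simp [hUw, w, Fintype.sum_sum_type]

end Blocks

end Matrix

theorem stmt4_general (n : ℕ) (A : Matrix (Fin n) (Fin n) ℂ) :
    (∃ B : Matrix (Fin n ⊕ Fin 1) (Fin n ⊕ Fin 1) ℂ,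
        Bᴴ * B = B * Bᴴ ∧ B.toBlocks₁₁ = A) ↔
      ∃ (C D : Matrix (Fin n) (Fin n) ℂ) (μ : ℂ),
        (∀ v : Fin n → ℂ, ∑ i, Complex.normSq ((C *ᵥ v) i) ≤ ∑ i, Complex.normSq (v i)) ∧
        (∃ U : Matrix (Fin n ⊕ Fin 1) (Fin n ⊕ Fin 1) ℂ,
            Uᴴ * U = 1 ∧ U.toBlocks₁₁ = C) ∧
        D.IsDiag ∧
        A = C * D * Cᴴ + μ • (1 : Matrix (Fin n) (Fin n) ℂ) := by
  constructor
  · rintro ⟨B, hB, rfl⟩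
    have : IsStarNormal B := ⟨hB⟩
    obtain ⟨U, hU, d, rfl⟩ := exists_unitary_eq_mul_diagonal_mul_star B
    have hU' : Uᴴ * U = 1 := mem_unitaryGroup_iff'.mp hU
    exact ⟨U.toBlocks₁₁, _, _, sum_normSq_toBlocks₁₁_mulVec_le hU', ⟨U, hU', rfl⟩,
      isDiag_diagonal _, toBlocks₁₁_mul_diagonal_mul_conjTranspose (mem_unitaryGroup_iff.mp hU) d⟩
  · rintro ⟨C, D, μ, -, ⟨U, hU, rfl⟩, hD, rfl⟩
    have hU' : U ∈ unitaryGroup _ ℂ := mem_unitaryGroup_iff'.mpr hU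
    let d : Fin n ⊕ Fin 1 → ℂ := Sum.elim (fun i => D i i + μ) fun _ => μ
    refine ⟨U * diagonal d * Uᴴ, (isStarNormal_mul_diagonal_mul_star hU' d).star_comm_self.eq, ?_⟩
    rw [toBlocks₁₁_mul_diagonal_mul_conjTranspose (mem_unitaryGroup_iff.mp hU') d]
    simp only [d, Sum.elim_inl, Sum.elim_inr, add_sub_cancel_right]
    exact congr(U.toBlocks₁₁ * $hD.diagonal_diag * U.toBlocks₁₁ᴴ + μ • 1)

theorem stmt4 (n : ℕ) (A : Matrix (Fin n) (Fin n) ℂ)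
    (hA : ¬ Aᴴ * A = A * Aᴴ) :
    (∃ B : Matrix (Fin n ⊕ Fin 1) (Fin n ⊕ Fin 1) ℂ,
        Bᴴ * B = B * Bᴴ ∧ B.toBlocks₁₁ = A) ↔
      ∃ (C D : Matrix (Fin n) (Fin n) ℂ) (μ : ℂ),
        (∀ v : Fin n → ℂ, ∑ i, Complex.normSq ((C *ᵥ v) i) ≤ ∑ i, Complex.normSq (v i)) ∧
        (∃ U : Matrix (Fin n ⊕ Fin 1) (Fin n ⊕ Fin 1) ℂ,
            Uᴴ * U = 1 ∧ U.toBlocks₁₁ = C) ∧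
        D.IsDiag ∧
        A = C * D * Cᴴ + μ • (1 : Matrix (Fin n) (Fin n) ℂ) :=
  stmt4_general n A
end

section
/- Let A be an n×n complex matrix satisfying A*A − AA* = H where H = diag(d, −d, 0, …, 0) with d > 0. Write A in block form with 2×2 upper-left block [[a11,a12],[a21,a22]], rows u,v ∈ ℂ^{1×(n−2)} in positions (1,3..n) and (2,3..n), and columns w*, q* ∈ ℂ^{n−2} in positions (3..n,1) and (3..n,2). Then a11 = a22, and uu* = qq*, vv* = ww*, uv* = wq*, uw* = vq*. -/
open Matrix

private lemma filterSet5 (m : ℕ) :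
    (Finset.univ.filter (fun i : Fin (m + 2) => 2 ≤ (i : ℕ))) = Finset.univ \ {0, 1} := by
  ext i
  simp only [Finset.mem_filter, Finset.mem_univ, true_and, Finset.mem_sdiff,
    Finset.mem_insert, Finset.mem_singleton, Fin.ext_iff, Fin.val_zero, Fin.val_one]
  omega

private lemma sumFilter5 (m : ℕ) (f : Fin (m + 2) → ℂ) :
    (∑ i ∈ Finset.univ.filter (fun i : Fin (m + 2) => 2 ≤ (i : ℕ)), f i)
      = (∑ i, f i) - f 0 - f 1 := by
  rw [filterSet5, Finset.sum_sdiff_eq_sub (Finset.subset_univ _),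
    Finset.sum_pair (show (0 : Fin (m + 2)) ≠ 1 by simp [Fin.ext_iff])]
  ring

private lemma traceDiagMul5 (m : ℕ) (v : Fin (m + 2) → ℂ)
    (hv : ∀ i : Fin (m + 2), 2 ≤ (i : ℕ) → v i = 0)
    (M : Matrix (Fin (m + 2)) (Fin (m + 2)) ℂ) :
    (Matrix.diagonal v * M).trace = v 0 * M 0 0 + v 1 * M 1 1 := by
  have h : (Matrix.diagonal v * M).trace = ∑ i, v i * M i i := by
    simp [Matrix.trace, Matrix.diag, Matrix.diagonal_mul]
  have h2 := sumFilter5 m (fun i => v i * M i i)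
  have h3 : (∑ i ∈ Finset.univ.filter (fun i : Fin (m + 2) => 2 ≤ (i : ℕ)),
      v i * M i i) = 0 := by
    refine Finset.sum_eq_zero fun i hi => ?_
    rw [hv i (Finset.mem_filter.mp hi).2, zero_mul]
  rw [h]
  have := h2
  rw [h3] at this
  linear_combination -this

theorem stmt5 (m : ℕ) (d : ℝ) (hd : 0 < d) (A : Matrix (Fin (m + 2)) (Fin (m + 2)) ℂ)
    (hH : Aᴴ * A - A * Aᴴ =
      Matrix.diagonal (fun i : Fin (m + 2) =>
        if (i : ℕ) = 0 then (d : ℂ) else if (i : ℕ) = 1 then -(d : ℂ) else 0)) :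
    A 0 0 = A 1 1 ∧
    -- uu* = qq*
    (∑ i ∈ Finset.univ.filter (fun i : Fin (m + 2) => 2 ≤ (i : ℕ)),
        A 0 i * star (A 0 i))
      = ∑ i ∈ Finset.univ.filter (fun i : Fin (m + 2) => 2 ≤ (i : ℕ)),
        star (A i 1) * A i 1 ∧
    -- vv* = ww*
    (∑ i ∈ Finset.univ.filter (fun i : Fin (m + 2) => 2 ≤ (i : ℕ)),
        A 1 i * star (A 1 i))
      = ∑ i ∈ Finset.univ.filter (fun i : Fin (m + 2) => 2 ≤ (i : ℕ)),
        star (A i 0) * A i 0 ∧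
    -- uv* = wq*
    (∑ i ∈ Finset.univ.filter (fun i : Fin (m + 2) => 2 ≤ (i : ℕ)),
        A 0 i * star (A 1 i))
      = ∑ i ∈ Finset.univ.filter (fun i : Fin (m + 2) => 2 ≤ (i : ℕ)),
        star (A i 0) * A i 1 ∧
    -- uw* = vq*
    (∑ i ∈ Finset.univ.filter (fun i : Fin (m + 2) => 2 ≤ (i : ℕ)),
        A 0 i * A i 0)
      = ∑ i ∈ Finset.univ.filter (fun i : Fin (m + 2) => 2 ≤ (i : ℕ)),
        A 1 i * A i 1 := by
  set v : Fin (m + 2) → ℂ := fun i =>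
    if (i : ℕ) = 0 then (d : ℂ) else if (i : ℕ) = 1 then -(d : ℂ) else 0 with hvdef
  have hd' : (d : ℂ) ≠ 0 := by exact_mod_cast hd.ne'
  have hv0 : v 0 = (d : ℂ) := by simp [hvdef]
  have hv1 : v 1 = -(d : ℂ) := by simp [hvdef, Fin.val_one]
  have hv : ∀ i : Fin (m + 2), 2 ≤ (i : ℕ) → v i = 0 := by
    intro i hi
    simp only [hvdef]
    rw [if_neg (by omega), if_neg (by omega)]
  -- trace helper
  have tr0 : ∀ M : Matrix (Fin (m + 2)) (Fin (m + 2)) ℂ,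
      (Matrix.diagonal v * M).trace = (d : ℂ) * M 0 0 - (d : ℂ) * M 1 1 := by
    intro M
    rw [traceDiagMul5 m v hv M, hv0, hv1]
    ring
  -- trace(H*A) = 0
  have t1 : (Matrix.diagonal v * A).trace = 0 := by
    have e : (A * Aᴴ) * A = A * (Aᴴ * A) := by rw [Matrix.mul_assoc]
    rw [← hH, sub_mul, Matrix.trace_sub, e, Matrix.trace_mul_comm A (Aᴴ * A), sub_self]
  -- trace(H*A²) = 0
  have t2 : (Matrix.diagonal v * (A * A)).trace = 0 := by
    have e1 : (A * Aᴴ) * (A * A) = A * ((Aᴴ * A) * A) := by noncomm_ring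
    have e2 : (Aᴴ * A) * (A * A) = ((Aᴴ * A) * A) * A := by noncomm_ring
    rw [← hH, sub_mul, Matrix.trace_sub, e1, e2,
      Matrix.trace_mul_comm A ((Aᴴ * A) * A), sub_self]
  -- trace(H*P) + trace(H*Q) = 0
  have hPQ : ((Aᴴ * A) * (Aᴴ * A)).trace = ((A * Aᴴ) * (A * Aᴴ)).trace := by
    rw [show (Aᴴ * A) * (Aᴴ * A) = Aᴴ * (A * (Aᴴ * A)) from by noncomm_ring,
      Matrix.trace_mul_comm,
      show (A * (Aᴴ * A)) * Aᴴ = (A * Aᴴ) * (A * Aᴴ) from by noncomm_ring]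
  have tsum : (Matrix.diagonal v * (Aᴴ * A)).trace
      + (Matrix.diagonal v * (A * Aᴴ)).trace = 0 := by
    rw [← hH, sub_mul, sub_mul, Matrix.trace_sub, Matrix.trace_sub,
      Matrix.trace_mul_comm (A * Aᴴ) (Aᴴ * A)]
    linear_combination hPQ
  have tdiff : (Matrix.diagonal v * (Aᴴ * A)).trace
      - (Matrix.diagonal v * (A * Aᴴ)).trace = 2 * (d : ℂ) * d := by
    have : (Matrix.diagonal v * (Aᴴ * A)).trace
        - (Matrix.diagonal v * (A * Aᴴ)).trace
        = (Matrix.diagonal v * (Aᴴ * A - A * Aᴴ)).trace := by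
      rw [Matrix.mul_sub, Matrix.trace_sub]
    rw [this, hH, tr0]
    simp [Matrix.diagonal_apply_eq, hv0, hv1]
    ring
  -- scalar entry facts
  have T1 : A 0 0 = A 1 1 := by
    have h := t1
    rw [tr0] at h
    exact mul_left_cancel₀ hd' (by linear_combination h)
  have hstar : star (A 0 0) = star (A 1 1) := congrArg star T1
  have T2 : (A * A) 0 0 = (A * A) 1 1 := by
    have h := t2
    rw [tr0] at h
    exact mul_left_cancel₀ hd' (by linear_combination h)
  have T3 : (Aᴴ * A) 0 0 - (Aᴴ * A) 1 1 = (d : ℂ) := by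
    have h1 := tsum
    have h2 := tdiff
    rw [tr0, tr0] at h1 h2
    exact mul_left_cancel₀ hd' (by linear_combination (h1 + h2) / 2)
  have T4 : (A * Aᴴ) 0 0 - (A * Aᴴ) 1 1 = -(d : ℂ) := by
    have h1 := tsum
    have h2 := tdiff
    rw [tr0, tr0] at h1 h2
    exact mul_left_cancel₀ hd' (by linear_combination (h1 - h2) / 2)
  have E1 : (Aᴴ * A) 0 0 - (A * Aᴴ) 0 0 = (d : ℂ) := by
    have h := congrFun (congrFun hH 0) 0
    simpa [Matrix.sub_apply, Matrix.diagonal_apply_eq, hvdef] using h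
  have E3 : (Aᴴ * A) 0 1 - (A * Aᴴ) 0 1 = 0 := by
    have h := congrFun (congrFun hH 0) 1
    simpa [Matrix.sub_apply,
      Matrix.diagonal_apply_ne _ (show (0 : Fin (m+2)) ≠ 1 by simp [Fin.ext_iff])] using h
  -- expand matrix entries into sums
  simp only [Matrix.mul_apply, Matrix.conjTranspose_apply] at T2 T3 T4 E1 E3
  refine ⟨T1, ?_, ?_, ?_, ?_⟩
  · rw [sumFilter5, sumFilter5]
    linear_combination T3 - E1 - A 0 0 * hstar - star (A 1 1) * T1
  · rw [sumFilter5, sumFilter5]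
    linear_combination -E1 - T4 + A 0 0 * hstar + star (A 1 1) * T1
  · rw [sumFilter5, sumFilter5]
    linear_combination -E3 - star (A 1 0) * T1 + A 0 1 * hstar
  · rw [sumFilter5, sumFilter5]
    linear_combination T2 - (A 0 0 + A 1 1) * T1
end

section
/- Suppose A is an n×n complex matrix with A*A − AA* = H = diag(d, −d, 0, …, 0), d > 0, and B = [[A, x],[y*, z]] is a normal (n+1)×(n+1) completion of A. Then x and y are supported on their first two coordinates: x = (x1, x2, 0, …, 0) and y = (y1, y2, 0, …, 0), with |x1|² − |x2|² = d, y1 = e^{iθ} conj(x2) and y2 = e^{iθ} conj(x1) for some real θ. -/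
/-!
Comparing the upper-left blocks of `B*B = BB*` gives `A*A + yy* = AA* + xx*`, i.e. `H = xx* − yy*`.
For `i ≥ 2` the entries `(i,i)` and `(i,0)` say `|xᵢ| = |yᵢ|` and `xᵢ x̄₀ = yᵢ ȳ₀`; multiplying the
latter by its conjugate gives `|xᵢ|² (|x₀|² − |y₀|²) = 0`, and `|x₀|² − |y₀|² = d ≠ 0`. The same
trick on `x₀ x̄₁ = y₀ ȳ₁` yields `|x₀|²|x₁|² = (|x₀|² − d)(|x₁|² + d)`, hence `|x₀|² − |x₁|² = d`,
`|y₀| = |x₁|` and `|y₁| = |x₀|`; the phase of `y₁ / x̄₀` is then the common `θ`.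
-/

open Matrix

theorem selfCommutator_eq_of_normal_completion {n : ℕ} {A : Matrix (Fin n) (Fin n) ℂ}
    {x y : Fin n → ℂ} {z : ℂ}
    (hB : (completion A x y z)ᴴ * completion A x y z
        = completion A x y z * (completion A x y z)ᴴ) :
    Aᴴ * A - A * Aᴴ = vecMulVec x (star x) - vecMulVec y (star y) := by
  ext i j
  have hij := congr_fun₂ hB (Sum.inl i) (Sum.inl j)
  simp only [completion, mul_apply, Fintype.sum_sum_type, Fin.sum_univ_one, conjTranspose_apply,
    fromBlocks_apply₁₁, fromBlocks_apply₁₂, fromBlocks_apply₂₁, of_apply, star_star] at hij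
  simp only [Matrix.sub_apply, mul_apply, conjTranspose_apply, vecMulVec_apply, Pi.star_apply]
  linear_combination hij

theorem mul_star_mul_mul_star_of_mul_star_eq {R : Type*} [CommSemiring R] [StarRing R]
    {a b c e : R} (h : a * star c = b * star e) :
    a * star a * (c * star c) = b * star b * (e * star e) := by
  have h' : c * star a = e * star b := by simpa [mul_comm] using congrArg star h
  calc a * star a * (c * star c) = a * star c * (c * star a) := by ring
    _ = b * star e * (e * star b) := by rw [h, h']
    _ = b * star b * (e * star e) := by ring

theorem eq_zero_of_mul_star_eq {a b c e : ℂ} (ha : a * star a = b * star b)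
    (hac : a * star c = b * star e) (hce : c * star c ≠ e * star e) : a = 0 ∧ b = 0 := by
  have hprod := mul_star_mul_mul_star_of_mul_star_eq hac
  rw [← ha] at hprod
  have haa : a * star a = 0 := by
    by_contra hne
    exact hce (mul_left_cancel₀ hne hprod)
  exact ⟨(CStarRing.mul_star_self_eq_zero_iff a).mp haa,
    (CStarRing.mul_star_self_eq_zero_iff b).mp (ha ▸ haa)⟩

theorem norm_eq_norm_of_mul_star_eq {a b : ℂ} (h : a * star a = b * star b) : ‖a‖ = ‖b‖ := by
  rw [Complex.star_def, Complex.mul_conj', Complex.mul_conj'] at h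
  exact (sq_eq_sq₀ (norm_nonneg a) (norm_nonneg b)).mp (by exact_mod_cast h)

theorem exists_exp_mul_of_norm_eq {w w' : ℂ} (h : ‖w‖ = ‖w'‖) :
    ∃ θ : ℝ, w = Complex.exp (θ * Complex.I) * w' := by
  refine ⟨w.arg - w'.arg, ?_⟩
  calc w = ‖w‖ * Complex.exp (w.arg * Complex.I) := (Complex.norm_mul_exp_arg_mul_I w).symm
    _ = Complex.exp ((w.arg - w'.arg : ℝ) * Complex.I) *
          (‖w'‖ * Complex.exp (w'.arg * Complex.I)) := by
      rw [h, mul_left_comm, ← Complex.exp_add]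
      push_cast
      ring_nf
    _ = Complex.exp ((w.arg - w'.arg : ℝ) * Complex.I) * w' := by
      rw [Complex.norm_mul_exp_arg_mul_I]

theorem exists_exp_mul_star_of_mul_star_eq {a b u v : ℂ} (hu : ‖u‖ = ‖b‖) (hv : ‖v‖ = ‖a‖)
    (h : a * star b = u * star v) :
    ∃ θ : ℝ, u = Complex.exp (θ * Complex.I) * star b ∧
      v = Complex.exp (θ * Complex.I) * star a := by
  by_cases ha : a = 0
  · obtain ⟨θ, hθ⟩ := exists_exp_mul_of_norm_eq (hu.trans (norm_star b).symm)
    refine ⟨θ, hθ, ?_⟩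
    rw [ha, norm_zero, norm_eq_zero] at hv
    simp [ha, hv]
  · obtain ⟨θ, hθ⟩ := exists_exp_mul_of_norm_eq (hv.trans (norm_star a).symm)
    refine ⟨θ, ?_, hθ⟩
    set c := Complex.exp (θ * Complex.I)
    have hc : c * star c = 1 := by
      rw [Complex.star_def, Complex.mul_conj', Complex.norm_exp_ofReal_mul_I]; simp
    have hb : star b = u * star c := by
      refine mul_left_cancel₀ ha ?_
      rw [h, hθ, star_mul', star_star]; ring
    rw [hb, mul_left_comm, hc, mul_one]

theorem stmt6 (m : ℕ) (d : ℝ) (hd : 0 < d) (A : Matrix (Fin (m + 2)) (Fin (m + 2)) ℂ)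
    (hH : Aᴴ * A - A * Aᴴ =
      Matrix.diagonal (fun i : Fin (m + 2) =>
        if (i : ℕ) = 0 then (d : ℂ) else if (i : ℕ) = 1 then -(d : ℂ) else 0))
    (x y : Fin (m + 2) → ℂ) (z : ℂ)
    (hB : (completion A x y z)ᴴ * completion A x y z
        = completion A x y z * (completion A x y z)ᴴ) :
    (∀ i : Fin (m + 2), 2 ≤ (i : ℕ) → x i = 0 ∧ y i = 0) ∧
    Complex.normSq (x 0) - Complex.normSq (x 1) = d ∧
    ∃ θ : ℝ, y 0 = Complex.exp (θ * Complex.I) * star (x 1) ∧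
      y 1 = Complex.exp (θ * Complex.I) * star (x 0) := by
  have entry (i j) : x i * star (x j) - y i * star (y j) = (Aᴴ * A - A * Aᴴ) i j :=
    (congr_fun₂ (selfCommutator_eq_of_normal_completion hB) i j).symm
  rw [hH] at entry
  have h00 : x 0 * star (x 0) - y 0 * star (y 0) = d := by simpa using entry 0 0
  have h11 : x 1 * star (x 1) - y 1 * star (y 1) = -d := by simpa using entry 1 1
  have h01 : x 0 * star (x 1) = y 0 * star (y 1) := sub_eq_zero.mp (by simpa using entry 0 1)
  have hd' : (d : ℂ) ≠ 0 := by exact_mod_cast hd.ne'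
  have hx : x 0 * star (x 0) - x 1 * star (x 1) = d := by
    refine mul_left_cancel₀ hd' ?_
    linear_combination -(mul_star_mul_mul_star_of_mul_star_eq h01) + y 1 * star (y 1) * h00
      + (x 0 * star (x 0) - d) * h11
  refine ⟨fun i hi => ?_, ?_, ?_⟩
  · have hi0 : i ≠ 0 := fun h => by simp [h] at hi
    have hi1 : (i : ℕ) ≠ 1 := by omega
    refine eq_zero_of_mul_star_eq (sub_eq_zero.mp ?_) (sub_eq_zero.mp ?_)
      (sub_ne_zero.mp (h00 ▸ hd'))
    · simpa [hi0, hi1] using entry i i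
    · simpa [hi0] using entry i 0
  · rw [Complex.star_def, Complex.mul_conj, Complex.mul_conj] at hx
    exact_mod_cast hx
  · refine exists_exp_mul_star_of_mul_star_eq (norm_eq_norm_of_mul_star_eq ?_)
      (norm_eq_norm_of_mul_star_eq ?_) h01
    · linear_combination hx - h00
    · linear_combination -hx - h11
end

section
/- Every non-normal 2×2 complex matrix has normal defect one: it can be completed to a normal 3×3 matrix. -/
/-!
Every complex 2 × 2 matrix is unitarily triangularizable (Schur): taking a unit eigenvector as the
first column of a unitary `U` gives `A = U T Uᴴ` with `T = !![p, b; 0, q]`. Such a `T` has an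
explicit normal 3 × 3 completion, and conjugating it by the unitary `U ⊕ 1` yields a normal matrix
whose upper-left block is `U T Uᴴ = A`.
-/

open Matrix

namespace Matrix

section Completion

variable {R : Type*} [CommRing R] {n : ℕ}

def extendByOne (U : Matrix (Fin n) (Fin n) R) : Matrix (Fin (n + 1)) (Fin (n + 1)) R :=
  reindex finSumFinEquiv finSumFinEquiv (fromBlocks U 0 0 1)

variable [StarRing R]

def IsNormalCompletion (B : Matrix (Fin (n + 1)) (Fin (n + 1)) R)
    (A : Matrix (Fin n) (Fin n) R) : Prop :=
  IsStarNormal B ∧ B.submatrix Fin.castSucc Fin.castSucc = A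

variable {U : Matrix (Fin n) (Fin n) R}

theorem extendByOne_mem_unitaryGroup (hU : U ∈ unitaryGroup (Fin n) R) :
    extendByOne U ∈ unitaryGroup (Fin (n + 1)) R := by
  rw [mem_unitaryGroup_iff, star_eq_conjTranspose] at hU ⊢
  simp [extendByOne, fromBlocks_conjTranspose, fromBlocks_multiply, hU, fromBlocks_one]

theorem submatrix_castSucc_extendByOne_mul_mul (B : Matrix (Fin (n + 1)) (Fin (n + 1)) R) :
    (extendByOne U * B * star (extendByOne U)).submatrix Fin.castSucc Fin.castSucc =
      U * B.submatrix Fin.castSucc Fin.castSucc * star U := by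
  ext i j
  simp [extendByOne, mul_apply, Fin.sum_univ_castSucc]

theorem IsNormalCompletion.unitary_conj {B : Matrix (Fin (n + 1)) (Fin (n + 1)) R}
    {A : Matrix (Fin n) (Fin n) R} (hB : IsNormalCompletion B A)
    (hU : U ∈ unitaryGroup (Fin n) R) :
    IsNormalCompletion (extendByOne U * B * star (extendByOne U)) (U * A * star U) := by
  obtain ⟨hnormal, hcorner⟩ := hB
  refine ⟨?_, by rw [submatrix_castSucc_extendByOne_mul_mul, hcorner]⟩
  exact IsStarNormal.map (Unitary.conjStarAlgAut R _ ⟨_, extendByOne_mem_unitaryGroup hU⟩) B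

end Completion

section Triangularization

variable {R : Type*} [CommRing R] [StarRing R] {ι : Type*} [Fintype ι]

theorem star_mul_mul_apply_of_mulVec_col {A U : Matrix ι ι R} {μ : R} {i : ι}
    (h : A *ᵥ U.col i = μ • U.col i) (j : ι) :
    (star U * A * U) j i = μ * (star U * U) j i := by
  have hcol (k : ι) : (A * U) k i = μ * U k i := congrFun h k
  rw [Matrix.mul_assoc, mul_apply, mul_apply, Finset.mul_sum]
  exact Finset.sum_congr rfl fun k _ => by rw [hcol]; ring

def unitaryOfColumn (v : Fin 2 → R) : Matrix (Fin 2) (Fin 2) R :=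
  !![v 0, -star (v 1); v 1, star (v 0)]

theorem unitaryOfColumn_mem_unitaryGroup {v : Fin 2 → R} (hv : star v ⬝ᵥ v = 1) :
    unitaryOfColumn v ∈ unitaryGroup (Fin 2) R := by
  rw [mem_unitaryGroup_iff']
  simp only [dotProduct, Fin.sum_univ_two, Pi.star_apply] at hv
  ext i j
  fin_cases i <;> fin_cases j <;>
    simp [unitaryOfColumn, star_eq_conjTranspose, mul_apply, Fin.sum_univ_two] <;>
    first | ring1 | linear_combination hv

open ComplexOrder in
theorem exists_unit_eigenvector [DecidableEq ι] [Nonempty ι]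
    (A : Matrix ι ι ℂ) : ∃ (μ : ℂ) (v : ι → ℂ), A *ᵥ v = μ • v ∧ star v ⬝ᵥ v = 1 := by
  obtain ⟨μ, hμ⟩ := Module.End.exists_eigenvalue (toLin' A)
  obtain ⟨v, hv⟩ := hμ.exists_hasEigenvector
  have hAv : A *ᵥ v = μ • v := by simpa using hv.apply_eq_smul
  obtain ⟨hre, him⟩ := Complex.pos_iff.1 (dotProduct_star_self_pos_iff.2 hv.2)
  set r := (star v ⬝ᵥ v).re
  have hr : star v ⬝ᵥ v = r := Complex.ext rfl (by simpa using him.symm)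
  refine ⟨μ, ((√r)⁻¹ : ℝ) • v, by rw [mulVec_smul, hAv, smul_comm], ?_⟩
  rw [star_smul, smul_dotProduct, dotProduct_smul, hr, star_trivial, smul_smul,
    Complex.real_smul]
  norm_cast
  field_simp
  exact (Real.sq_sqrt hre.le).symm

theorem exists_unitary_conj_eq_upperTriangular (A : Matrix (Fin 2) (Fin 2) ℂ) :
    ∃ U ∈ unitaryGroup (Fin 2) ℂ, ∃ p b q : ℂ, A = U * !![p, b; 0, q] * star U := by
  obtain ⟨μ, v, hAv, hv⟩ := exists_unit_eigenvector A
  set U := unitaryOfColumn v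
  have hU : U ∈ unitaryGroup (Fin 2) ℂ := unitaryOfColumn_mem_unitaryGroup hv
  have hcol : U.col 0 = v := by ext i; fin_cases i <;> rfl
  have hT : (star U * A * U) 1 0 = 0 := by
    rw [star_mul_mul_apply_of_mulVec_col (hcol ▸ hAv), Unitary.star_mul_self_of_mem hU]
    simp
  refine ⟨U, hU, (star U * A * U) 0 0, (star U * A * U) 0 1, (star U * A * U) 1 1, ?_⟩
  rw [← hT, ← eta_fin_two (star U * A * U)]
  simp only [← Matrix.mul_assoc, Unitary.mul_star_self_of_mem hU, Matrix.one_mul]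
  rw [Matrix.mul_assoc, Unitary.mul_star_self_of_mem hU, Matrix.mul_one]

end Triangularization

/- For a completion `[[T, x], [yᴴ, z]]`, normality means `x xᴴ - y yᴴ = Tᴴ T - T Tᴴ`, `‖x‖ = ‖y‖`
and `Tᴴ x + z y = T y + conj z • x`; here `x = (0, s)`, `y = (b, q - p)` and `z = q`. -/
open Complex in
noncomputable def triangularCompletion (p b q : ℂ) : Matrix (Fin 3) (Fin 3) ℂ :=
  !![p, b, 0;
    0, q, (√(normSq b + normSq (q - p)) : ℝ);
    star b, star q - star p, q]

open Complex ComplexConjugate in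
theorem isNormalCompletion_triangularCompletion (p b q : ℂ) :
    IsNormalCompletion (triangularCompletion p b q) !![p, b; 0, q] := by
  refine ⟨⟨?_⟩, ?_⟩
  · have hs : ((√(normSq b + normSq (q - p)) : ℝ) : ℂ) * (√(normSq b + normSq (q - p)) : ℝ)
        = b * conj b + (q - p) * (conj q - conj p) := by
      rw [← ofReal_mul, Real.mul_self_sqrt (add_nonneg (normSq_nonneg _) (normSq_nonneg _)),
        ofReal_add, ← mul_conj, ← mul_conj, map_sub]
    ext i j
    fin_cases i <;> fin_cases j <;>
      simp [triangularCompletion, star_eq_conjTranspose, mul_apply, Fin.sum_univ_three] <;>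
      first | ring1 | linear_combination hs | linear_combination -hs
  · ext i j
    fin_cases i <;> fin_cases j <;> rfl

theorem exists_isNormalCompletion (A : Matrix (Fin 2) (Fin 2) ℂ) :
    ∃ B : Matrix (Fin 3) (Fin 3) ℂ, IsNormalCompletion B A := by
  obtain ⟨U, hU, p, b, q, rfl⟩ := exists_unitary_conj_eq_upperTriangular A
  exact ⟨_, (isNormalCompletion_triangularCompletion p b q).unitary_conj hU⟩

end Matrix

theorem stmt10 (A : Matrix (Fin 2) (Fin 2) ℂ) :
    ∃ B : Matrix (Fin 3) (Fin 3) ℂ, Bᴴ * B = B * Bᴴ ∧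
      ∀ i j : Fin 2, B (Fin.castLE (by norm_num) i) (Fin.castLE (by norm_num) j) = A i j := by
  obtain ⟨B, hnormal, hcorner⟩ := exists_isNormalCompletion A
  exact ⟨B, hnormal.star_comm_self.eq, fun i j => congrFun₂ hcorner i j⟩
end

section
/- Let A be the 4×4 matrix with rows (0,0,1,−i), (2,0,0,0), (0,1,1/√2, i/√2), (0,−i, i/√2, −1/√2). Then rank(A*A − AA*) = 2, but A has no normal 5×5 completion; i.e., the rank condition rank(A*A−AA*)=2 is necessary but not sufficient for normal defect one. -/
open Matrix Complex

noncomputable def A11 : Matrix (Fin 4) (Fin 4) ℂ :=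
  !![0, 0, 1, -I;
     2, 0, 0, 0;
     0, 1, 1 / (Real.sqrt 2 : ℂ), I / (Real.sqrt 2 : ℂ);
     0, -I, I / (Real.sqrt 2 : ℂ), -(1 / (Real.sqrt 2 : ℂ))]

/-!
Write a normal extension as `B = [[A, u], [r, c]]`. The leading blocks of `Bᴴ B = B Bᴴ` give
`Aᴴ A - A Aᴴ = u uᴴ - rᴴ r`. For the defect `diag(2, -2, 0, 0)` this says `‖u₀‖² = ‖r₀‖² + 2`,
and the zero entries at `(0, q)` and `(q, q)` then force `u_q = r_q = 0` for `q = 2, 3`.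
With these zeros, rows 2 and 3 of the last column of `Bᴴ B = B Bᴴ` read `u₀ = conj r₁` and
`u₀ = -conj r₁`, so `u₀ = 0`, contradicting `‖u₀‖² ≥ 2`.
-/

theorem RCLike.eq_zero_of_mul_conj_eq {𝕜 : Type*} [RCLike 𝕜] {a b x y : 𝕜}
    (hab : ‖b‖ < ‖a‖) (hxy : ‖x‖ ^ 2 = ‖y‖ ^ 2) (h : a * star x = star b * y) : x = 0 ∧ y = 0 := by
  replace hxy : ‖x‖ = ‖y‖ := (sq_eq_sq₀ (norm_nonneg x) (norm_nonneg y)).mp hxy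
  have hnorm : ‖a‖ * ‖x‖ = ‖b‖ * ‖x‖ := by
    simpa only [norm_mul, norm_star, ← hxy] using congrArg norm h
  have hx : x = 0 := by
    by_contra hx
    exact hab.ne' (mul_right_cancel₀ (norm_ne_zero_iff.mpr hx) hnorm)
  exact ⟨hx, norm_eq_zero.mp (hxy ▸ norm_eq_zero.mpr hx)⟩

namespace Matrix

variable {R : Type*} {n : ℕ}

def leadingBlock (B : Matrix (Fin (n + 1)) (Fin (n + 1)) R) : Matrix (Fin n) (Fin n) R :=
  B.submatrix Fin.castSucc Fin.castSucc

def borderCol (B : Matrix (Fin (n + 1)) (Fin (n + 1)) R) : Fin n → R :=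
  fun i => B i.castSucc (Fin.last n)

def borderRow (B : Matrix (Fin (n + 1)) (Fin (n + 1)) R) : Fin n → R :=
  fun j => B (Fin.last n) j.castSucc

section Ring

variable [Ring R] [Star R] {B : Matrix (Fin (n + 1)) (Fin (n + 1)) R}

theorem leadingBlock_defect_apply (hB : Bᴴ * B = B * Bᴴ) (i j : Fin n) :
    (B.leadingBlockᴴ * B.leadingBlock - B.leadingBlock * B.leadingBlockᴴ) i j
      = B.borderCol i * star (B.borderCol j) - star (B.borderRow i) * B.borderRow j := by
  have h := congrFun (congrFun hB i.castSucc) j.castSucc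
  simp only [mul_apply, conjTranspose_apply, Fin.sum_univ_castSucc] at h
  simp only [Matrix.sub_apply, mul_apply, conjTranspose_apply, leadingBlock, submatrix_apply,
    borderCol, borderRow]
  rw [← sub_eq_zero] at h ⊢
  rw [← h]
  abel

theorem leadingBlock_mulVec_borderCol (hB : Bᴴ * B = B * Bᴴ) (i : Fin n) :
    (B.leadingBlockᴴ *ᵥ B.borderCol) i + star (B.borderRow i) * B (Fin.last n) (Fin.last n)
      = (B.leadingBlock *ᵥ star B.borderRow) i
        + B.borderCol i * star (B (Fin.last n) (Fin.last n)) := by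
  have h := congrFun (congrFun hB i.castSucc) (Fin.last n)
  simpa only [mul_apply, conjTranspose_apply, Fin.sum_univ_castSucc, mulVec, dotProduct,
    leadingBlock, submatrix_apply, borderCol, borderRow, Pi.star_apply] using h

end Ring

theorem leadingBlock_defect_apply_self {𝕜 : Type*} [RCLike 𝕜]
    {B : Matrix (Fin (n + 1)) (Fin (n + 1)) 𝕜} (hB : Bᴴ * B = B * Bᴴ) (i : Fin n) :
    (B.leadingBlockᴴ * B.leadingBlock - B.leadingBlock * B.leadingBlockᴴ) i i
      = ((‖B.borderCol i‖ ^ 2 - ‖B.borderRow i‖ ^ 2 : ℝ) : 𝕜) := by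
  rw [leadingBlock_defect_apply hB, RCLike.star_def, RCLike.mul_conj, RCLike.conj_mul]
  push_cast
  rfl

theorem borderCol_eq_zero_of_defect_eq_zero {𝕜 : Type*} [RCLike 𝕜]
    {B : Matrix (Fin (n + 1)) (Fin (n + 1)) 𝕜} (hB : Bᴴ * B = B * Bᴴ) {p q : Fin n}
    (hp : ‖B.borderRow p‖ < ‖B.borderCol p‖)
    (hpq : (B.leadingBlockᴴ * B.leadingBlock - B.leadingBlock * B.leadingBlockᴴ) p q = 0)
    (hqq : (B.leadingBlockᴴ * B.leadingBlock - B.leadingBlock * B.leadingBlockᴴ) q q = 0) :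
    B.borderCol q = 0 ∧ B.borderRow q = 0 := by
  rw [leadingBlock_defect_apply hB, sub_eq_zero] at hpq
  rw [leadingBlock_defect_apply_self hB, RCLike.ofReal_eq_zero, sub_eq_zero] at hqq
  exact RCLike.eq_zero_of_mul_conj_eq hp hqq hpq

end Matrix

theorem A11_defect : A11ᴴ * A11 - A11 * A11ᴴ = diagonal ![2, -2, 0, 0] := by
  have hs : ((Real.sqrt 2 : ℝ) : ℂ) ^ 2 = 2 := by
    norm_cast; exact Real.sq_sqrt (by norm_num)
  ext i j
  simp only [Matrix.sub_apply, mul_apply, Fin.sum_univ_four, conjTranspose_apply]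
  fin_cases i <;> fin_cases j <;>
    simp only [A11, diagonal, of_apply, Fin.isValue, Fin.mk_one, Fin.reduceFinMk, Fin.zero_eta,
      cons_val, cons_val', cons_val_fin_one, cons_val_one, cons_val_zero, RCLike.star_def,
      conj_I, conj_ofReal, star_div₀, star_inv₀, star_neg, star_ofNat, star_one, star_zero,
      one_div, Fin.reduceEq, ↓reduceIte] <;>
    ring_nf <;> simp only [I_sq, inv_pow, hs] <;> ring

theorem A11_defect_rank : (A11ᴴ * A11 - A11 * A11ᴴ).rank = 2 := by
  rw [A11_defect, rank_diagonal, Fintype.card_subtype, Finset.card_filter, Fin.sum_univ_four]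
  simp

theorem A11_border_eq_zero {u r : Fin 4 → ℂ} {c : ℂ}
    (hu2 : u 2 = 0) (hu3 : u 3 = 0) (hr2 : r 2 = 0) (hr3 : r 3 = 0)
    (h : ∀ i, (A11ᴴ *ᵥ u) i + star (r i) * c = (A11 *ᵥ star r) i + u i * star c) :
    u 0 = 0 := by
  have h2 := h 2
  have h3 := h 3
  simp only [mulVec, dotProduct, A11, one_div, Fin.isValue, conjTranspose_apply, of_apply,
    cons_val', cons_val, cons_val_fin_one, RCLike.star_def, Fin.sum_univ_four, cons_val_zero,
    map_one, one_mul, cons_val_one, map_zero, zero_mul, add_zero, map_inv₀, conj_ofReal, hu2,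
    mul_zero, map_div₀, conj_I, hu3, hr2, star_zero, Pi.star_apply, zero_add, hr3, map_neg,
    neg_neg, neg_mul] at h2 h3
  have h0 : 2 * I * u 0 = 0 := by linear_combination I * h2 + h3
  simpa [I_ne_zero] using h0

theorem stmt11 :
    (A11ᴴ * A11 - A11 * A11ᴴ).rank = 2 ∧
    ¬ ∃ B : Matrix (Fin 5) (Fin 5) ℂ, Bᴴ * B = B * Bᴴ ∧
        ∀ i j : Fin 4, B (Fin.castLE (by norm_num) i) (Fin.castLE (by norm_num) j)
          = A11 i j := by
  refine ⟨A11_defect_rank, ?_⟩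
  rintro ⟨B, hB, hA⟩
  have hblock : B.leadingBlock = A11 := Matrix.ext hA
  have hdefect := A11_defect
  rw [← hblock] at hdefect
  have hnorm0 : ‖B.borderCol 0‖ ^ 2 - ‖B.borderRow 0‖ ^ 2 = (2 : ℝ) := by
    have h := leadingBlock_defect_apply_self hB 0
    rw [hdefect, diagonal_apply_eq, cons_val_zero, ← RCLike.ofReal_ofNat,
      RCLike.ofReal_inj] at h
    exact h.symm
  have hlt : ‖B.borderRow 0‖ < ‖B.borderCol 0‖ := by
    nlinarith [norm_nonneg (B.borderRow 0), norm_nonneg (B.borderCol 0)]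
  obtain ⟨hu2, hr2⟩ := borderCol_eq_zero_of_defect_eq_zero hB hlt (q := 2)
    (by rw [hdefect]; simp) (by rw [hdefect]; simp)
  obtain ⟨hu3, hr3⟩ := borderCol_eq_zero_of_defect_eq_zero hB hlt (q := 3)
    (by rw [hdefect]; simp) (by rw [hdefect]; simp)
  have hu0 := A11_border_eq_zero hu2 hu3 hr2 hr3 (by
    simpa only [hblock] using leadingBlock_mulVec_borderCol hB)
  rw [hu0, norm_zero] at hnorm0
  nlinarith [norm_nonneg (B.borderRow 0)]
end

section
/- Let A ∈ ℝ^{n×n} be a real matrix with n even that is not normal and has real normal defect 1, i.e., admits a real normal (n+1)×(n+1) completion. Then there exist a real contraction C ∈ ℝ^{n×n} admitting an orthogonal completion of size (n+1)×(n+1), a real block-diagonal matrix D consisting of 2×2 blocks of the form [[α,β],[−β,α]] and real scalar diagonal entries, and μ ∈ ℝ, such that A = C D Cᵀ + μ I. Conversely any such A that is not normal has real normal defect 1. -/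
/-!
A real normal matrix `B` is orthogonally similar to a normal form `Λ` consisting of `2 × 2`
blocks `[[α, β], [-β, α]]` followed by a diagonal. By induction, split off either a common real
eigenvector of `B` and `Bᵀ`, put last, or the plane spanned by the real and imaginary parts of a
complex eigenvector, put first; normality makes these subspaces reducing.

If `B` is a normal `(n + 1) × (n + 1)` completion of `A` with `n` even, `Λ` has at most `n / 2`
blocks, so its last diagonal entry `μ` is a lone scalar. Then `Λ - μ I` vanishes in its last row
and column, and the leading `n × n` corner of `B = Q (Λ - μ I) Qᵀ + μ I` is `A = C D Cᵀ + μ I`,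
where `C` is the corner of `Q`. Conversely `O (D ⊕ 0) Oᵀ + μ I` is a normal completion of
`C D Cᵀ + μ I`: `D` is normal because its diagonal part is symmetric, its off-diagonal part is
skew, and the two commute.
-/

open Matrix
open scoped ComplexOrder

section Orthogonal

variable {m ι κ : Type*}

theorem transpose_mul_mul_normal [Fintype m] [Fintype ι] [DecidableEq m] {P : Matrix m ι ℝ}
    (hP : P * Pᵀ = 1) {B : Matrix m m ℝ} (hB : Bᵀ * B = B * Bᵀ) :
    (Pᵀ * B * P)ᵀ * (Pᵀ * B * P) = (Pᵀ * B * P) * (Pᵀ * B * P)ᵀ := by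
  simp only [transpose_mul, transpose_transpose, Matrix.mul_assoc]
  simp only [← Matrix.mul_assoc P, hP, Matrix.one_mul]
  rw [← Matrix.mul_assoc Bᵀ, hB, Matrix.mul_assoc]

theorem add_smul_one_normal [Fintype m] [DecidableEq m] {B : Matrix m m ℝ}
    (hB : Bᵀ * B = B * Bᵀ) (μ : ℝ) :
    (B + μ • 1)ᵀ * (B + μ • 1) = (B + μ • 1) * (B + μ • 1)ᵀ := by
  simp only [transpose_add, transpose_smul, transpose_one, add_mul, mul_add, smul_mul_assoc,
    mul_smul_comm, Matrix.one_mul, Matrix.mul_one, hB, smul_add]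
  abel

theorem symm_add_skew_normal [Fintype m] {S K : Matrix m m ℝ} (hS : Sᵀ = S) (hK : Kᵀ = -K)
    (hSK : S * K = K * S) : (S + K)ᵀ * (S + K) = (S + K) * (S + K)ᵀ := by
  simp only [transpose_add, hS, hK, add_mul, mul_add, Matrix.neg_mul, Matrix.mul_neg, hSK]
  abel

theorem fromBlocks_zero_normal_iff [Fintype ι] [Fintype κ] (X : Matrix ι ι ℝ)
    (Y : Matrix κ κ ℝ) :
    (fromBlocks X 0 0 Y)ᵀ * fromBlocks X 0 0 Y = fromBlocks X 0 0 Y * (fromBlocks X 0 0 Y)ᵀ ↔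
      Xᵀ * X = X * Xᵀ ∧ Yᵀ * Y = Y * Yᵀ := by
  simp [fromBlocks_transpose, fromBlocks_multiply, fromBlocks_inj]

def OrthSimilar [Fintype m] [Fintype ι] [DecidableEq m] [DecidableEq ι] (B : Matrix m m ℝ)
    (M : Matrix ι ι ℝ) : Prop :=
  ∃ Q : Matrix m ι ℝ, Qᵀ * Q = 1 ∧ Q * Qᵀ = 1 ∧ B = Q * M * Qᵀ

namespace OrthSimilar

variable [Fintype m] [Fintype ι] [Fintype κ] [DecidableEq m] [DecidableEq ι] [DecidableEq κ]

theorem refl (B : Matrix m m ℝ) : OrthSimilar B B :=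
  ⟨1, by simp, by simp, by simp⟩

theorem trans {A : Matrix m m ℝ} {B : Matrix ι ι ℝ} {C : Matrix κ κ ℝ}
    (hAB : OrthSimilar A B) (hBC : OrthSimilar B C) : OrthSimilar A C := by
  obtain ⟨P, hP, hPP, rfl⟩ := hAB
  obtain ⟨Q, hQ, hQQ, rfl⟩ := hBC
  refine ⟨P * Q, ?_, ?_, ?_⟩
  · rw [transpose_mul, Matrix.mul_assoc, ← Matrix.mul_assoc Pᵀ, hP, Matrix.one_mul, hQ]
  · rw [transpose_mul, Matrix.mul_assoc, ← Matrix.mul_assoc Q, hQQ, Matrix.one_mul, hPP]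
  · simp only [transpose_mul, Matrix.mul_assoc]

theorem normal_iff {B : Matrix m m ℝ} {M : Matrix ι ι ℝ} (h : OrthSimilar B M) :
    Bᵀ * B = B * Bᵀ ↔ Mᵀ * M = M * Mᵀ := by
  obtain ⟨Q, hQ, hQQ, rfl⟩ := h
  refine ⟨fun hB => ?_, fun hM => ?_⟩
  · have hM : M = Qᵀ * (Q * M * Qᵀ) * Q := by
      rw [← Matrix.mul_assoc, ← Matrix.mul_assoc, hQ, Matrix.one_mul, Matrix.mul_assoc, hQ,
        Matrix.mul_one]
    rw [hM]
    exact transpose_mul_mul_normal hQQ hB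
  · simpa only [transpose_transpose] using transpose_mul_mul_normal (P := Qᵀ) (by simpa) hM

theorem reindex (M : Matrix ι ι ℝ) (e : ι ≃ κ) : OrthSimilar M (reindex e e M) := by
  refine ⟨(1 : Matrix κ κ ℝ).submatrix e id, by simp [transpose_submatrix], ?_, ?_⟩ <;>
    ext <;> simp [mul_apply, one_apply]

theorem fromBlocks_right {Y : Matrix ι ι ℝ} {Y' : Matrix κ κ ℝ} (h : OrthSimilar Y Y')
    (X : Matrix m m ℝ) : OrthSimilar (fromBlocks X 0 0 Y) (fromBlocks X 0 0 Y') := by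
  obtain ⟨Q, hQ, hQQ, rfl⟩ := h
  refine ⟨fromBlocks 1 0 0 Q, ?_, ?_, ?_⟩ <;>
    simp [fromBlocks_transpose, fromBlocks_multiply, hQ, hQQ, Matrix.mul_assoc]

end OrthSimilar

theorem exists_fromCols_orthogonal [Fintype m] [Fintype ι] [Fintype κ] [DecidableEq ι]
    [DecidableEq κ] {V : Matrix m ι ℝ} (hV : Vᵀ * V = 1) (e : ι ⊕ κ ≃ m) :
    ∃ W : Matrix m κ ℝ, (fromCols V W)ᵀ * fromCols V W = 1 := by
  let v : ι ⊕ κ → EuclideanSpace ℝ m := Sum.elim (fun i => WithLp.toLp 2 fun a => V a i) 0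
  have hv : Orthonormal ℝ ((Set.range Sum.inl).domRestrict v) := by
    rw [orthonormal_iff_ite]
    rintro ⟨_, i, rfl⟩ ⟨_, j, rfl⟩
    have hij := congrFun (congrFun hV i) j
    simp only [transpose_apply, mul_apply, one_apply] at hij
    simp only [v, Set.domRestrict_apply, PiLp.inner_apply, Sum.elim_inl, RCLike.inner_apply,
      conj_trivial, mul_comm, hij]
    exact if_congr (Subtype.ext_iff.trans Sum.inl_injective.eq_iff).symm rfl rfl
  obtain ⟨b, hb⟩ := hv.exists_orthonormalBasis_extension_of_card_eq (ι := ι ⊕ κ)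
    (by simp [Fintype.card_congr e])
  refine ⟨of fun a k => b (Sum.inr k) a, ?_⟩
  have hVW : fromCols V (of fun a k => b (Sum.inr k) a) =
      (EuclideanSpace.basisFun m ℝ).toBasis.toMatrix b := by
    ext a (i | k)
    · simp [Module.Basis.toMatrix_apply, hb (Sum.inl i) ⟨i, rfl⟩, v]
    · simp [Module.Basis.toMatrix_apply]
  rw [hVW, ← conjTranspose_eq_transpose_of_trivial]
  exact (EuclideanSpace.basisFun m ℝ).toMatrix_orthonormalBasis_conjTranspose_mul_self b

theorem transpose_fromCols_mul_mul_fromCols [Fintype m] [Fintype ι] [DecidableEq ι]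
    {V : Matrix m ι ℝ} {W : Matrix m κ ℝ} {B : Matrix m m ℝ} {R : Matrix ι ι ℝ}
    (hV : Vᵀ * V = 1) (hVW : Vᵀ * W = 0) (hBV : B * V = V * R) (hBTV : Bᵀ * V = V * Rᵀ) :
    (fromCols V W)ᵀ * B * fromCols V W = fromBlocks R 0 0 (Wᵀ * B * W) := by
  have hVBW : Vᵀ * B * W = 0 := by
    rw [← transpose_transpose (Vᵀ * B), transpose_mul, transpose_transpose, hBTV,
      transpose_mul, transpose_transpose, Matrix.mul_assoc, hVW, Matrix.mul_zero]
  have hWBV : Wᵀ * B * V = 0 := by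
    rw [Matrix.mul_assoc, hBV, ← Matrix.mul_assoc, ← transpose_transpose (Wᵀ * V),
      transpose_mul, transpose_transpose, hVW, transpose_zero, Matrix.zero_mul]
  rw [transpose_fromCols, fromRows_mul, fromRows_mul_fromCols, hVBW, hWBV, Matrix.mul_assoc,
    hBV, ← Matrix.mul_assoc, hV, Matrix.one_mul]

theorem exists_orthSimilar_fromBlocks [Fintype m] [Fintype ι] [Fintype κ] [DecidableEq m]
    [DecidableEq ι] [DecidableEq κ] {B : Matrix m m ℝ} {V : Matrix m ι ℝ} {R : Matrix ι ι ℝ}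
    (hV : Vᵀ * V = 1) (hBV : B * V = V * R) (hBTV : Bᵀ * V = V * Rᵀ) (e : ι ⊕ κ ≃ m) :
    ∃ W : Matrix m κ ℝ, OrthSimilar B (fromBlocks R 0 0 (Wᵀ * B * W)) := by
  obtain ⟨W, hP⟩ := exists_fromCols_orthogonal hV e
  have hPP : fromCols V W * (fromCols V W)ᵀ = 1 := (mul_eq_one_comm_of_equiv e).mp hP
  have hVW : Vᵀ * W = 0 := by
    rw [transpose_fromCols, fromRows_mul_fromCols, ← fromBlocks_one, fromBlocks_inj] at hP
    exact hP.2.1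
  refine ⟨W, fromCols V W, hP, hPP, ?_⟩
  rw [← transpose_fromCols_mul_mul_fromCols hV hVW hBV hBTV]
  simp only [← Matrix.mul_assoc, hPP, Matrix.one_mul]
  rw [Matrix.mul_assoc, hPP, Matrix.mul_one]

end Orthogonal

section Eigen

variable {m : Type*} [Fintype m]

theorem conjTranspose_mulVec_eq_star_smul [DecidableEq m] {N : Matrix m m ℂ}
    (hN : Nᴴ * N = N * Nᴴ) {μ : ℂ} {z : m → ℂ} (hz : N *ᵥ z = μ • z) :
    Nᴴ *ᵥ z = star μ • z := by
  set P := N - μ • 1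
  have hPz : P *ᵥ z = 0 := by simp [P, sub_mulVec, hz, smul_mulVec]
  have hPH : Pᴴ = Nᴴ - star μ • 1 := by simp [P, conjTranspose_sub, conjTranspose_smul]
  have hP : P * Pᴴ = Pᴴ * P := by
    simp only [hPH, P, sub_mul, mul_sub, smul_mul_assoc, mul_smul_comm, Matrix.mul_one,
      Matrix.one_mul, hN, smul_sub, smul_smul, mul_comm μ]
    abel
  -- normality of `P` gives `‖Pᴴ z‖² = ‖P z‖² = 0`
  have hPHz : star (Pᴴ *ᵥ z) ⬝ᵥ (Pᴴ *ᵥ z) = 0 := by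
    rw [star_mulVec, conjTranspose_conjTranspose, ← dotProduct_mulVec, mulVec_mulVec, hP,
      ← mulVec_mulVec, hPz, mulVec_zero, dotProduct_zero]
  have := dotProduct_star_self_eq_zero.mp hPHz
  rwa [hPH, sub_mulVec, smul_mulVec, one_mulVec, sub_eq_zero] at this

def rotationBlock (α β : ℝ) : Matrix (Fin 2) (Fin 2) ℝ := !![α, β; -β, α]

theorem transpose_rotationBlock (α β : ℝ) : (rotationBlock α β)ᵀ = rotationBlock α (-β) := by
  ext i j
  fin_cases i <;> fin_cases j <;> simp [rotationBlock]

def reImCols (z : m → ℂ) : Matrix m (Fin 2) ℝ := of fun i => ![(z i).re, (z i).im]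

theorem mul_reImCols_of_mulVec_eq {B : Matrix m m ℝ} {z : m → ℂ} {μ : ℂ}
    (h : B.map Complex.ofRealHom *ᵥ z = μ • z) :
    B * reImCols z = reImCols z * rotationBlock μ.re μ.im := by
  ext i j
  have hi := congrFun h i
  simp only [mulVec, dotProduct, map_apply, Pi.smul_apply, smul_eq_mul] at hi
  fin_cases j
  · have hre := congrArg Complex.re hi
    simp only [Complex.ofRealHom_eq_coe, Complex.re_sum, Complex.mul_re, Complex.ofReal_re,
      Complex.ofReal_im, zero_mul, sub_zero] at hre
    simp only [reImCols, Fin.zero_eta, Fin.isValue, mul_apply, of_apply, cons_val_zero, hre,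
      rotationBlock, cons_val', cons_val_fin_one, Fin.sum_univ_two, cons_val_one, mul_neg]
    ring
  · have him := congrArg Complex.im hi
    simp only [Complex.ofRealHom_eq_coe, Complex.im_sum, Complex.mul_im, Complex.ofReal_re,
      Complex.ofReal_im, zero_mul, add_zero] at him
    simp only [reImCols, Fin.mk_one, Fin.isValue, mul_apply, of_apply, cons_val_one,
      cons_val_fin_one, him, rotationBlock, cons_val', Fin.sum_univ_two, cons_val_zero]
    ring

theorem exists_mul_eq_mul_rotationBlock [DecidableEq m] [Nonempty m] {B : Matrix m m ℝ}
    (hB : Bᵀ * B = B * Bᵀ) : ∃ (X : Matrix m (Fin 2) ℝ) (α β : ℝ), X ≠ 0 ∧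
      B * X = X * rotationBlock α β ∧ Bᵀ * X = X * (rotationBlock α β)ᵀ := by
  set N : Matrix m m ℂ := B.map Complex.ofRealHom
  have hNH : Nᴴ = Bᵀ.map Complex.ofRealHom := by ext; simp [N]
  have hN : Nᴴ * N = N * Nᴴ := by rw [hNH, ← Matrix.map_mul, ← Matrix.map_mul, hB]
  obtain ⟨μ, hμ⟩ := Module.End.exists_eigenvalue (toLin' N)
  obtain ⟨z, hz⟩ := hμ.exists_hasEigenvector
  have hNz : N *ᵥ z = μ • z := by simpa using hz.apply_eq_smul
  have hNHz := conjTranspose_mulVec_eq_star_smul hN hNz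
  refine ⟨reImCols z, μ.re, μ.im, ?_, mul_reImCols_of_mulVec_eq hNz, ?_⟩
  · intro h
    refine hz.2 (funext fun i => Complex.ext ?_ ?_)
    · simpa [reImCols] using congrFun (congrFun h i) 0
    · simpa [reImCols] using congrFun (congrFun h i) 1
  · rw [hNH] at hNHz
    simpa [transpose_rotationBlock] using mul_reImCols_of_mulVec_eq hNHz

theorem transpose_mul_self_eq_smul_one_of_rotationBlock {B : Matrix m m ℝ}
    {X : Matrix m (Fin 2) ℝ} {α β : ℝ} (hβ : β ≠ 0) (hBX : B * X = X * rotationBlock α β)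
    (hBTX : Bᵀ * X = X * (rotationBlock α β)ᵀ) : Xᵀ * X = (Xᵀ * X) 0 0 • 1 := by
  set G := Xᵀ * X
  have hG : G * rotationBlock α β = rotationBlock α β * G := by
    calc G * rotationBlock α β = Xᵀ * (B * X) := by rw [hBX, Matrix.mul_assoc]
      _ = (Bᵀ * X)ᵀ * X := by rw [transpose_mul, transpose_transpose, Matrix.mul_assoc]
      _ = rotationBlock α β * G := by
        rw [hBTX, transpose_mul, transpose_transpose, Matrix.mul_assoc]
  have hsymm : G 1 0 = G 0 1 := by simp only [G, mul_apply, transpose_apply, mul_comm]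
  have h00 := congrFun (congrFun hG 0) 0
  have h01 := congrFun (congrFun hG 0) 1
  simp only [rotationBlock, mul_apply, of_apply, cons_val', cons_val_zero, cons_val_one,
    cons_val_fin_one, Fin.sum_univ_two, mul_neg, hsymm] at h00 h01
  have hG01 : G 0 1 = 0 := mul_left_cancel₀ hβ (by linarith)
  have hG11 : G 1 1 = G 0 0 := mul_left_cancel₀ hβ (by linarith)
  ext i j
  fin_cases i <;> fin_cases j <;> simp [hG01, hG11, hsymm]

theorem exists_col_of_rotationBlock_zero {B : Matrix m m ℝ}
    {X : Matrix m (Fin 2) ℝ} {α : ℝ} (hX0 : X ≠ 0) (hBX : B * X = X * rotationBlock α 0)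
    (hBTX : Bᵀ * X = X * (rotationBlock α 0)ᵀ) :
    ∃ v : Matrix m (Fin 1) ℝ, vᵀ * v = (vᵀ * v) 0 0 • 1 ∧ v ≠ 0 ∧
      B * v = v * (α • (1 : Matrix (Fin 1) (Fin 1) ℝ)) ∧
      Bᵀ * v = v * (α • (1 : Matrix (Fin 1) (Fin 1) ℝ))ᵀ := by
  obtain ⟨j, hv0⟩ : ∃ j, X.submatrix id (fun _ : Fin 1 => j) ≠ 0 := by
    by_contra! h
    exact hX0 (ext fun i j => by simpa using congrFun (congrFun (h j) i) 0)
  have hR : rotationBlock α 0 = α • 1 := by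
    ext i j
    fin_cases i <;> fin_cases j <;> simp [rotationBlock]
  have hcol : ∀ {C : Matrix m m ℝ}, C * X = X * (α • (1 : Matrix (Fin 2) (Fin 2) ℝ)) →
      C * X.submatrix id (fun _ : Fin 1 => j) =
        X.submatrix id (fun _ : Fin 1 => j) * (α • (1 : Matrix (Fin 1) (Fin 1) ℝ)) := by
    intro C hC
    rw [← submatrix_id_id C, ← submatrix_mul C X id id _ Function.bijective_id, hC,
      Matrix.mul_smul, Matrix.mul_one, Matrix.mul_smul, Matrix.mul_one]
    rfl
  refine ⟨_, ?_, hv0, hcol (by rw [hBX, hR]), ?_⟩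
  · ext i j
    fin_cases i; fin_cases j
    simp
  · simpa using hcol (by simpa [hR, transpose_rotationBlock] using hBTX)

theorem exists_smul_transpose_mul_self_eq_one {ι : Type*} [DecidableEq ι]
    {X : Matrix m ι ℝ} {a : ℝ} (hX : Xᵀ * X = a • 1) (hX0 : X ≠ 0) :
    ∃ c : ℝ, (c • X)ᵀ * (c • X) = 1 := by
  obtain ⟨i, j, hij⟩ : ∃ i j, X i j ≠ 0 := by
    by_contra! h
    exact hX0 (ext h)
  have ha : 0 < a := by
    have hjj := congrFun (congrFun hX j) j
    simp only [mul_apply, transpose_apply, Matrix.smul_apply, one_apply_eq, smul_eq_mul,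
      mul_one] at hjj
    rw [← hjj]
    exact Finset.sum_pos' (fun k _ => mul_self_nonneg _)
      ⟨i, Finset.mem_univ _, mul_self_pos.mpr hij⟩
  refine ⟨(√a)⁻¹, ?_⟩
  rw [transpose_smul, Matrix.smul_mul, Matrix.mul_smul, hX, smul_smul, smul_smul, ← mul_inv,
    Real.mul_self_sqrt ha.le, inv_mul_cancel₀ ha.ne', one_smul]

theorem card_le_of_transpose_mul_self_eq_one {ι : Type*} [Fintype ι] [DecidableEq ι]
    {V : Matrix m ι ℝ} (hV : Vᵀ * V = 1) : Fintype.card ι ≤ Fintype.card m := by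
  rw [← rank_one (R := ℝ), ← hV]
  exact (rank_mul_le_right _ _).trans (rank_le_card_height V)

end Eigen

def IsRotationPair (ℓ i j : ℕ) : Prop :=
  ∃ t < ℓ, (i = 2 * t ∧ j = 2 * t + 1) ∨ (i = 2 * t + 1 ∧ j = 2 * t)

theorem isRotationPair_iff {ℓ i j : ℕ} :
    IsRotationPair ℓ i j ↔ i ≠ j ∧ i / 2 = j / 2 ∧ i / 2 < ℓ := by
  constructor
  · rintro ⟨t, ht, h | h⟩ <;> omega
  · rintro ⟨h₁, h₂, h₃⟩
    exact ⟨i / 2, h₃, by omega⟩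

/-- Blocks `[[α, β], [-β, α]]` on the index pairs `(2t, 2t + 1)`, `t < ℓ`, then a diagonal. -/
structure IsRealNormalForm {m : ℕ} (Λ : Matrix (Fin m) (Fin m) ℝ) (ℓ : ℕ) : Prop where
  two_mul_le : 2 * ℓ ≤ m
  apply_pair : ∀ i j : Fin m, IsRotationPair ℓ i j → Λ i i = Λ j j ∧ Λ i j = -Λ j i
  apply_eq_zero : ∀ i j : Fin m, i ≠ j → ¬IsRotationPair ℓ i j → Λ i j = 0

theorem isRealNormalForm_iff {m ℓ : ℕ} {Λ : Matrix (Fin m) (Fin m) ℝ} :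
    IsRealNormalForm Λ ℓ ↔ 2 * ℓ ≤ m ∧
      (∀ t : ℕ, t < ℓ → ∀ h : 2 * t + 1 < m,
        Λ ⟨2 * t, Nat.lt_of_succ_lt h⟩ ⟨2 * t, Nat.lt_of_succ_lt h⟩ =
            Λ ⟨2 * t + 1, h⟩ ⟨2 * t + 1, h⟩ ∧
        Λ ⟨2 * t, Nat.lt_of_succ_lt h⟩ ⟨2 * t + 1, h⟩ =
            -Λ ⟨2 * t + 1, h⟩ ⟨2 * t, Nat.lt_of_succ_lt h⟩) ∧
      ∀ i j : Fin m, i ≠ j → ¬IsRotationPair ℓ i j → Λ i j = 0 := by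
  refine ⟨fun h => ⟨h.two_mul_le, fun t ht _ => h.apply_pair _ _ ⟨t, ht, .inl ⟨rfl, rfl⟩⟩,
    h.apply_eq_zero⟩, fun ⟨hℓ, hblock, hzero⟩ => ⟨hℓ, ?_, hzero⟩⟩
  rintro ⟨i, hi⟩ ⟨j, hj⟩ ⟨t, ht, ⟨rfl, rfl⟩ | ⟨rfl, rfl⟩⟩
  · exact hblock t ht hj
  · have := hblock t ht hi
    exact ⟨this.1.symm, by linarith [this.2]⟩

namespace IsRealNormalForm

variable {m ℓ : ℕ} {Λ : Matrix (Fin m) (Fin m) ℝ}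

theorem of_fin_zero (Λ : Matrix (Fin 0) (Fin 0) ℝ) : IsRealNormalForm Λ 0 :=
  ⟨le_rfl, fun i => i.elim0, fun i => i.elim0⟩

theorem reindex_fromBlocks_smul_one (h : IsRealNormalForm Λ ℓ) (α : ℝ) :
    IsRealNormalForm (reindex ((Equiv.sumComm (Fin 1) (Fin m)).trans finSumFinEquiv)
      ((Equiv.sumComm (Fin 1) (Fin m)).trans finSumFinEquiv) (fromBlocks (α • 1) 0 0 Λ)) ℓ := by
  have hℓ := h.two_mul_le
  have last_not_pair : ∀ j : ℕ, ¬IsRotationPair ℓ m j ∧ ¬IsRotationPair ℓ j m := by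
    simp only [isRotationPair_iff]; omega
  refine ⟨by omega, fun i j hij => ?_, fun i j hij hp => ?_⟩
  · induction i using Fin.lastCases with
    | last => exact absurd hij (last_not_pair j).1
    | cast i =>
      induction j using Fin.lastCases with
      | last => exact absurd hij (last_not_pair i).2
      | cast j => simpa using h.apply_pair i j hij
  · induction i using Fin.lastCases <;> induction j using Fin.lastCases
    · exact absurd rfl hij
    · simp
    · simp
    · simpa using h.apply_eq_zero _ _ (by simpa using hij) hp

theorem reindex_fromBlocks_rotationBlock (h : IsRealNormalForm Λ ℓ) (α β : ℝ) :
    IsRealNormalForm (reindex finSumFinEquiv finSumFinEquiv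
      (fromBlocks (rotationBlock α β) 0 0 Λ)) (ℓ + 1) := by
  have hℓ := h.two_mul_le
  have shift : ∀ i j : ℕ, IsRotationPair (ℓ + 1) (2 + i) (2 + j) ↔ IsRotationPair ℓ i j := by
    simp only [isRotationPair_iff]; omega
  have not_pair : ∀ (a : Fin 2) (j : ℕ), ¬IsRotationPair (ℓ + 1) a (2 + j) ∧
      ¬IsRotationPair (ℓ + 1) (2 + j) a := by
    simp only [isRotationPair_iff]; omega
  refine ⟨by omega, fun i j hij => ?_, fun i j hij hp => ?_⟩
  · induction i using Fin.addCases with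
    | left a =>
      induction j using Fin.addCases with
      | left b => fin_cases a <;> fin_cases b <;> simp_all [rotationBlock, isRotationPair_iff]
      | right b => exact absurd hij (not_pair a b).1
    | right a =>
      induction j using Fin.addCases with
      | left b => exact absurd hij (not_pair b a).2
      | right b => simpa using h.apply_pair a b ((shift a b).mp hij)
  · induction i using Fin.addCases with
    | left a =>
      induction j using Fin.addCases with
      | left b => fin_cases a <;> fin_cases b <;> simp_all [isRotationPair_iff]
      | right b => simp
    | right a =>
      induction j using Fin.addCases with
      | left b => simp
      | right b => simpa using h.apply_eq_zero a b (by simpa using hij) (by simpa [shift] using hp)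

theorem sub_smul_one (h : IsRealNormalForm Λ ℓ) (μ : ℝ) : IsRealNormalForm (Λ - μ • 1) ℓ :=
  ⟨h.two_mul_le, fun i j hij => by
    have hne : i ≠ j := Fin.ne_of_val_ne (isRotationPair_iff.mp hij).1
    simpa [hne, hne.symm] using h.apply_pair i j hij,
    fun i j hij hp => by simpa [hij] using h.apply_eq_zero i j hij hp⟩

theorem submatrix_castSucc {n : ℕ} {Λ : Matrix (Fin (n + 1)) (Fin (n + 1)) ℝ}
    (h : IsRealNormalForm Λ ℓ) (hℓ : 2 * ℓ ≤ n) :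
    IsRealNormalForm (Λ.submatrix Fin.castSucc Fin.castSucc) ℓ :=
  ⟨hℓ, fun i j hij => h.apply_pair _ _ hij,
    fun i j hij hp => h.apply_eq_zero _ _ (by simpa using hij) hp⟩

theorem apply_last_eq_zero {n : ℕ} {Λ : Matrix (Fin (n + 1)) (Fin (n + 1)) ℝ}
    (h : IsRealNormalForm Λ ℓ) (hℓ : 2 * ℓ ≤ n) (hΛ : Λ (Fin.last n) (Fin.last n) = 0)
    (j : Fin (n + 1)) : Λ (Fin.last n) j = 0 ∧ Λ j (Fin.last n) = 0 := by
  rcases eq_or_ne j (Fin.last n) with rfl | hj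
  · exact ⟨hΛ, hΛ⟩
  have hj' : (j : ℕ) < n := Fin.val_lt_last hj
  constructor <;> refine h.apply_eq_zero _ _ (by simp [hj, hj.symm]) ?_ <;>
    simp only [isRotationPair_iff, Fin.val_last] <;> omega

theorem apply_of_ne (h : IsRealNormalForm Λ ℓ) {i j : Fin m} (hij : i ≠ j) :
    Λ j i = -Λ i j ∧ (Λ i i = Λ j j ∨ Λ i j = 0) := by
  by_cases hp : IsRotationPair ℓ i j
  · have hp' : IsRotationPair ℓ j i := by rw [isRotationPair_iff] at hp ⊢; omega
    exact ⟨(h.apply_pair j i hp').2, .inl (h.apply_pair i j hp).1⟩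
  · have hp' : ¬IsRotationPair ℓ j i := by rw [isRotationPair_iff] at hp ⊢; omega
    simp [h.apply_eq_zero i j hij hp, h.apply_eq_zero j i hij.symm hp']

theorem normal (h : IsRealNormalForm Λ ℓ) : Λᵀ * Λ = Λ * Λᵀ := by
  set S := diagonal fun i => Λ i i
  have hK : (Λ - S)ᵀ = -(Λ - S) := by
    ext i j
    rcases eq_or_ne i j with rfl | hij
    · simp [S]
    · simp [S, hij, hij.symm, (h.apply_of_ne hij).1]
  have hSK : S * (Λ - S) = (Λ - S) * S := by
    ext i j
    rcases eq_or_ne i j with rfl | hij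
    · simp [S]
    · rcases (h.apply_of_ne hij).2 with hd | hz
      · simp [S, hij, hd, mul_comm]
      · simp [S, hij, hz]
  have := symm_add_skew_normal (S := S) (diagonal_transpose _) hK hSK
  rwa [add_sub_cancel] at this

end IsRealNormalForm

theorem exists_isRealNormalForm_orthSimilar_reindex_fromBlocks {m k : ℕ} {ι : Type*}
    [Fintype ι] [DecidableEq ι]
    (IH : ∀ B' : Matrix (Fin k) (Fin k) ℝ, B'ᵀ * B' = B' * B'ᵀ →
      ∃ (Λ : Matrix (Fin k) (Fin k) ℝ) (ℓ : ℕ), IsRealNormalForm Λ ℓ ∧ OrthSimilar B' Λ)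
    {B : Matrix (Fin m) (Fin m) ℝ} (hB : Bᵀ * B = B * Bᵀ) {X : Matrix (Fin m) ι ℝ} {a : ℝ}
    (hX : Xᵀ * X = a • 1) (hX0 : X ≠ 0) {R : Matrix ι ι ℝ} (hBX : B * X = X * R)
    (hBTX : Bᵀ * X = X * Rᵀ) (e : ι ⊕ Fin k ≃ Fin m) :
    ∃ (Λ : Matrix (Fin k) (Fin k) ℝ) (ℓ : ℕ), IsRealNormalForm Λ ℓ ∧
      OrthSimilar B (reindex e e (fromBlocks R 0 0 Λ)) := by
  obtain ⟨c, hV⟩ := exists_smul_transpose_mul_self_eq_one hX hX0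
  obtain ⟨W, hsim⟩ := exists_orthSimilar_fromBlocks hV
    (by rw [Matrix.mul_smul, hBX, Matrix.smul_mul])
    (by rw [Matrix.mul_smul, hBTX, Matrix.smul_mul]) e
  obtain ⟨Λ, ℓ, hΛ, hsim'⟩ := IH _ ((fromBlocks_zero_normal_iff _ _).mp (hsim.normal_iff.mp hB)).2
  exact ⟨Λ, ℓ, hΛ, (hsim.trans (hsim'.fromBlocks_right R)).trans (.reindex _ e)⟩

theorem exists_isRealNormalForm_orthSimilar {m : ℕ} {B : Matrix (Fin m) (Fin m) ℝ}
    (hB : Bᵀ * B = B * Bᵀ) :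
    ∃ (Λ : Matrix (Fin m) (Fin m) ℝ) (ℓ : ℕ), IsRealNormalForm Λ ℓ ∧ OrthSimilar B Λ := by
  induction m using Nat.strong_induction_on with
  | _ m IH =>
  rcases m.eq_zero_or_pos with rfl | hm
  · exact ⟨B, 0, .of_fin_zero B, .refl B⟩
  have : Nonempty (Fin m) := ⟨⟨0, hm⟩⟩
  obtain ⟨X, α, β, hX0, hBX, hBTX⟩ := exists_mul_eq_mul_rotationBlock hB
  -- a real eigenvalue is split off as the last index, a rotation block as the first two,
  -- so that the blocks of the normal form stay in front
  by_cases hβ : β = 0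
  · subst hβ
    obtain ⟨k, rfl⟩ : ∃ k, m = k + 1 := ⟨m - 1, by omega⟩
    obtain ⟨v, hv, hv0, hBv, hBTv⟩ := exists_col_of_rotationBlock_zero hX0 hBX hBTX
    obtain ⟨Λ, ℓ, hΛ, hsim⟩ := exists_isRealNormalForm_orthSimilar_reindex_fromBlocks
      (fun B' hB' => IH k (by omega) hB') hB hv hv0 hBv hBTv
      ((Equiv.sumComm _ _).trans finSumFinEquiv)
    exact ⟨_, ℓ, hΛ.reindex_fromBlocks_smul_one α, hsim⟩
  · have hX := transpose_mul_self_eq_smul_one_of_rotationBlock hβ hBX hBTX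
    have hm2 : 2 ≤ m := by
      obtain ⟨c, hc⟩ := exists_smul_transpose_mul_self_eq_one hX hX0
      simpa using card_le_of_transpose_mul_self_eq_one hc
    obtain ⟨k, rfl⟩ : ∃ k, m = 2 + k := ⟨m - 2, by omega⟩
    obtain ⟨Λ, ℓ, hΛ, hsim⟩ := exists_isRealNormalForm_orthSimilar_reindex_fromBlocks
      (fun B' hB' => IH k (by omega) hB') hB hX hX0 hBX hBTX finSumFinEquiv
    exact ⟨_, ℓ + 1, hΛ.reindex_fromBlocks_rotationBlock α β, hsim⟩

section Corner

variable {n : ℕ}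

theorem submatrix_castSucc_mul_mul_transpose_add_smul_one
    {O Z : Matrix (Fin (n + 1)) (Fin (n + 1)) ℝ} (hrow : ∀ j, Z (Fin.last n) j = 0)
    (hcol : ∀ i, Z i (Fin.last n) = 0) (μ : ℝ) :
    (O * Z * Oᵀ + μ • 1).submatrix Fin.castSucc Fin.castSucc =
      O.submatrix Fin.castSucc Fin.castSucc * Z.submatrix Fin.castSucc Fin.castSucc *
        (O.submatrix Fin.castSucc Fin.castSucc)ᵀ + μ • 1 := by
  ext i j
  simp [mul_apply, Fin.sum_univ_castSucc, hrow, hcol, one_apply]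

theorem sum_sq_mulVec_submatrix_castSucc_le {O : Matrix (Fin (n + 1)) (Fin (n + 1)) ℝ}
    (hO : Oᵀ * O = 1) (v : Fin n → ℝ) :
    ∑ i, ((O.submatrix Fin.castSucc Fin.castSucc *ᵥ v) i) ^ 2 ≤ ∑ i, v i ^ 2 := by
  set w : Fin (n + 1) → ℝ := Fin.snoc v 0
  have hOw : (O *ᵥ w) ⬝ᵥ (O *ᵥ w) = w ⬝ᵥ w := by
    rw [dotProduct_mulVec, ← mulVec_transpose, mulVec_mulVec, hO, one_mulVec]
  calc ∑ i, ((O.submatrix Fin.castSucc Fin.castSucc *ᵥ v) i) ^ 2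
      = ∑ i, ((O *ᵥ w) (Fin.castSucc i)) ^ 2 := by
        simp [w, mulVec, dotProduct, Fin.sum_univ_castSucc]
    _ ≤ ∑ k, ((O *ᵥ w) k) ^ 2 := by
        rw [Fin.sum_univ_castSucc]
        exact le_add_of_nonneg_right (sq_nonneg _)
    _ = ∑ k, w k ^ 2 := by simpa [dotProduct, sq] using hOw
    _ = ∑ i, v i ^ 2 := by simp [w, Fin.sum_univ_castSucc]

theorem exists_submatrix_castSucc_eq_of_normal (hn : Even n)
    {B : Matrix (Fin (n + 1)) (Fin (n + 1)) ℝ} (hB : Bᵀ * B = B * Bᵀ) :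
    ∃ (O : Matrix (Fin (n + 1)) (Fin (n + 1)) ℝ) (D : Matrix (Fin n) (Fin n) ℝ) (ℓ : ℕ) (μ : ℝ),
      Oᵀ * O = 1 ∧ IsRealNormalForm D ℓ ∧
      B.submatrix Fin.castSucc Fin.castSucc =
        O.submatrix Fin.castSucc Fin.castSucc * D * (O.submatrix Fin.castSucc Fin.castSucc)ᵀ +
          μ • 1 := by
  obtain ⟨Λ, ℓ, hΛ, Q, hQ, hQQ, rfl⟩ := exists_isRealNormalForm_orthSimilar hB
  -- `n + 1` is odd, so the last index carries a scalar of the normal form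
  have hℓ : 2 * ℓ ≤ n := by
    obtain ⟨c, rfl⟩ := hn
    have := hΛ.two_mul_le
    omega
  set μ := Λ (Fin.last n) (Fin.last n)
  have hZ := hΛ.sub_smul_one μ
  have hZlast := hZ.apply_last_eq_zero hℓ (by simp [μ])
  have hQΛ : Q * Λ * Qᵀ = Q * (Λ - μ • 1) * Qᵀ + μ • 1 := by
    rw [Matrix.mul_sub, Matrix.sub_mul, Matrix.mul_smul, Matrix.mul_one, Matrix.smul_mul, hQQ,
      sub_add_cancel]
  refine ⟨Q, _, ℓ, μ, hQ, hZ.submatrix_castSucc hℓ, ?_⟩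
  rw [hQΛ, submatrix_castSucc_mul_mul_transpose_add_smul_one (fun j => (hZlast j).1)
    (fun i => (hZlast i).2)]

theorem exists_normal_submatrix_castSucc_eq {O : Matrix (Fin (n + 1)) (Fin (n + 1)) ℝ}
    (hO : Oᵀ * O = 1) {D : Matrix (Fin n) (Fin n) ℝ} {ℓ : ℕ} (hD : IsRealNormalForm D ℓ) (μ : ℝ) :
    ∃ B : Matrix (Fin (n + 1)) (Fin (n + 1)) ℝ, Bᵀ * B = B * Bᵀ ∧
      B.submatrix Fin.castSucc Fin.castSucc =
        O.submatrix Fin.castSucc Fin.castSucc * D * (O.submatrix Fin.castSucc Fin.castSucc)ᵀ +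
          μ • 1 := by
  set Z := reindex finSumFinEquiv finSumFinEquiv (fromBlocks D 0 0 (0 : Matrix (Fin 1) (Fin 1) ℝ))
  have hZ : Zᵀ * Z = Z * Zᵀ := (OrthSimilar.reindex _ _).normal_iff.mp
    ((fromBlocks_zero_normal_iff _ _).mpr ⟨hD.normal, by simp⟩)
  have hOZ : OrthSimilar (O * Z * Oᵀ) Z := ⟨O, hO, mul_eq_one_comm.mp hO, rfl⟩
  have hZlast : ∀ k, Z (Fin.last n) k = 0 ∧ Z k (Fin.last n) = 0 := fun k => by
    induction k using Fin.lastCases <;> simp [Z]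
  have hZD : Z.submatrix Fin.castSucc Fin.castSucc = D := by ext; simp [Z]
  refine ⟨O * Z * Oᵀ + μ • 1, add_smul_one_normal (hOZ.normal_iff.mpr hZ) μ, ?_⟩
  rw [← hZD, submatrix_castSucc_mul_mul_transpose_add_smul_one (fun k => (hZlast k).1)
    (fun k => (hZlast k).2)]

end Corner

theorem stmt13 (n : ℕ) (hn : Even n) (A : Matrix (Fin n) (Fin n) ℝ) :
    (∃ B : Matrix (Fin (n + 1)) (Fin (n + 1)) ℝ, Bᵀ * B = B * Bᵀ ∧
        ∀ i j : Fin n, B i.castSucc j.castSucc = A i j) ↔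
    ∃ (C D : Matrix (Fin n) (Fin n) ℝ) (μ : ℝ),
      -- C is a contraction
      (∀ v : Fin n → ℝ, ∑ i, ((C *ᵥ v) i) ^ 2 ≤ ∑ i, (v i) ^ 2) ∧
      -- C admits an orthogonal completion of size (n+1)×(n+1)
      (∃ O : Matrix (Fin (n + 1)) (Fin (n + 1)) ℝ, Oᵀ * O = 1 ∧
          ∀ i j : Fin n, O i.castSucc j.castSucc = C i j) ∧
      -- D is block diagonal with 2×2 blocks [[α,β],[−β,α]] followed by scalar diagonal entries
      (∃ ℓ : ℕ, 2 * ℓ ≤ n ∧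
        (∀ t : ℕ, t < ℓ → ∀ h : 2 * t + 1 < n,
          D ⟨2 * t, by omega⟩ ⟨2 * t, by omega⟩ = D ⟨2 * t + 1, h⟩ ⟨2 * t + 1, h⟩ ∧
          D ⟨2 * t, by omega⟩ ⟨2 * t + 1, h⟩ = - D ⟨2 * t + 1, h⟩ ⟨2 * t, by omega⟩) ∧
        (∀ i j : Fin n, i ≠ j →
          (¬ ∃ t : ℕ, t < ℓ ∧ (((i : ℕ) = 2 * t ∧ (j : ℕ) = 2 * t + 1) ∨
            ((i : ℕ) = 2 * t + 1 ∧ (j : ℕ) = 2 * t))) → D i j = 0)) ∧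
      A = C * D * Cᵀ + μ • (1 : Matrix (Fin n) (Fin n) ℝ) := by
  constructor
  · rintro ⟨B, hB, hBA⟩
    obtain ⟨O, D, ℓ, μ, hO, hD, hBD⟩ := exists_submatrix_castSucc_eq_of_normal hn hB
    refine ⟨_, D, μ, sum_sq_mulVec_submatrix_castSucc_le hO, ⟨O, hO, fun _ _ => rfl⟩,
      ⟨ℓ, isRealNormalForm_iff.mp hD⟩, ?_⟩
    rw [← hBD]
    ext i j
    exact (hBA i j).symm
  · rintro ⟨C, D, μ, -, ⟨O, hO, hOC⟩, ⟨ℓ, hD⟩, rfl⟩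
    obtain rfl : O.submatrix Fin.castSucc Fin.castSucc = C := ext hOC
    obtain ⟨B, hB, hBD⟩ := exists_normal_submatrix_castSucc_eq hO (isRealNormalForm_iff.mpr hD) μ
    exact ⟨B, hB, fun i j => by rw [← hBD]; rfl⟩
end

section
/- Let K be a convex cone in a finite-dimensional real vector space H of dimension N, let L ⊆ H be a subspace of dimension n, set K' = K ∩ L, and let x generate an extreme ray of K'. Then the minimal face of K containing x has dimension at most N − n + 1. -/
/-- `F` is a face of the convex cone `K` (as sets): `F ⊆ K`, and whenever a sum of two
elements of `K` lies in `F`, both summands lie in `F`. -/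
def IsFaceOf {V : Type*} [AddCommGroup V] (K F : Set V) : Prop :=
  F ⊆ K ∧ ∀ a ∈ K, ∀ b ∈ K, a + b ∈ F → a ∈ F ∧ b ∈ F

/-!
The directions `y` along which `x ∈ K` can move both ways inside `K` form a subspace `S`, and
`K ∩ S` is a face of `K` containing `x`; hence the minimal face of `x` spans a subspace of `S`.
If `y ∈ S ∩ L`, then `x + εy` and `x - εy` lie in `K ∩ L` and add up to `2x`, so, the ray
through `x` being a face of `K ∩ L`, `y` is a multiple of `x`. Thus `S ∩ L` has dimension at
most one, and `dim S + dim L ≤ dim (S + L) + 1 ≤ N + 1`.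
-/

open Module Submodule

theorem Submodule.finrank_add_finrank_le_of_inf_le_span_singleton {𝕜 V : Type*} [DivisionRing 𝕜]
    [AddCommGroup V] [Module 𝕜 V] [FiniteDimensional 𝕜 V]
    {S L : Submodule 𝕜 V} {x : V} (h : S ⊓ L ≤ 𝕜 ∙ x) :
    finrank 𝕜 S + finrank 𝕜 L ≤ finrank 𝕜 V + 1 := by
  have hinf : finrank 𝕜 ↥(S ⊓ L) ≤ 1 :=
    (finrank_mono h).trans ((finrank_span_le_card {x}).trans (by simp))
  have := finrank_sup_add_finrank_inf_eq S L
  have := (S ⊔ L).finrank_le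
  omega

section

variable {𝕜 V : Type*} [Field 𝕜] [LinearOrder 𝕜] [IsStrictOrderedRing 𝕜]
  [AddCommGroup V] [Module 𝕜 V]

theorem mem_span_singleton_of_isFaceOf_ray {C : Set V} {x y : V} {ε : 𝕜} (hε : ε ≠ 0)
    (hray : IsFaceOf C {z | ∃ c : 𝕜, 0 ≤ c ∧ z = c • x})
    (hadd : x + ε • y ∈ C) (hsub : x - ε • y ∈ C) : y ∈ 𝕜 ∙ x := by
  obtain ⟨⟨c, -, hc⟩, -⟩ := hray.2 _ hadd _ hsub ⟨2, zero_le_two, by rw [two_smul]; abel⟩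
  have hy : y = (ε⁻¹ * (c - 1)) • x := by
    rw [mul_smul, sub_smul, one_smul, ← hc, add_sub_cancel_left, smul_smul, inv_mul_cancel₀ hε,
      one_smul]
  exact hy ▸ smul_mem _ _ (mem_span_singleton_self x)

namespace ConvexCone

variable (K : ConvexCone 𝕜 V) {x : V}

def twoSidedDirections (hx : x ∈ K) : Submodule 𝕜 V where
  carrier := {y | ∃ ε > 0, ∀ t : 𝕜, |t| ≤ ε → x + t • y ∈ K}
  zero_mem' := ⟨1, one_pos, fun t _ => by simpa using hx⟩
  add_mem' := by
    rintro y₁ y₂ ⟨ε₁, hε₁, h₁⟩ ⟨ε₂, hε₂, h₂⟩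
    refine ⟨min ε₁ ε₂ / 2, by positivity, fun t ht => ?_⟩
    have h2t : |2 * t| ≤ min ε₁ ε₂ := by rw [abs_mul, abs_two]; linarith
    have hmid : (2⁻¹ : 𝕜) • (x + (2 * t) • y₁) + (2⁻¹ : 𝕜) • (x + (2 * t) • y₂) ∈ K :=
      K.add_mem (K.smul_mem (by norm_num) (h₁ _ (h2t.trans (min_le_left _ _))))
        (K.smul_mem (by norm_num) (h₂ _ (h2t.trans (min_le_right _ _))))
    convert hmid using 1
    module
  smul_mem' := by
    rintro c y ⟨ε, hε, h⟩
    rcases eq_or_ne c 0 with rfl | hc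
    · exact ⟨1, one_pos, fun t _ => by simpa using hx⟩
    refine ⟨ε / |c|, by positivity, fun t ht => ?_⟩
    rw [smul_smul]
    apply h
    rwa [abs_mul, ← le_div_iff₀ (abs_pos.2 hc)]

theorem self_mem_twoSidedDirections (hx : x ∈ K) : x ∈ K.twoSidedDirections hx := by
  refine ⟨2⁻¹, by norm_num, fun t ht => ?_⟩
  have hpos : 0 < 1 + t := by linarith [neg_abs_le t]
  convert K.smul_mem hpos hx using 1
  module

theorem isFaceOf_inter_twoSidedDirections (hx : x ∈ K) :
    IsFaceOf (K : Set V) (K ∩ K.twoSidedDirections hx) := by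
  refine ⟨Set.inter_subset_left, fun a ha b hb ⟨_, ε, hε, hab⟩ => ?_⟩
  -- Moving forward along `a` stays in the cone; moving backward is paid for by `a + b`.
  have key : ∀ a ∈ K, ∀ b ∈ K, (∀ t : 𝕜, |t| ≤ ε → x + t • (a + b) ∈ K) →
      a ∈ K.twoSidedDirections hx := by
    intro a ha b hb hab
    refine ⟨ε, hε, fun t ht => ?_⟩
    rcases le_or_gt 0 t with ht0 | ht0
    · rcases ht0.eq_or_lt with rfl | ht0
      · simpa using hx
      · exact K.add_mem hx (K.smul_mem ht0 ha)
    · have : x + t • (a + b) + (-t) • b ∈ K := K.add_mem (hab t ht) (K.smul_mem (by linarith) hb)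
      convert this using 1
      module
  exact ⟨⟨ha, key a ha b hb hab⟩,
    ⟨hb, key b hb a ha fun t ht => by simpa [add_comm] using hab t ht⟩⟩

theorem twoSidedDirections_inf_le_span_singleton (L : Submodule 𝕜 V) (hx : x ∈ (K : Set V) ∩ L)
    (hray : IsFaceOf ((K : Set V) ∩ L) {z | ∃ c : 𝕜, 0 ≤ c ∧ z = c • x}) :
    K.twoSidedDirections hx.1 ⊓ L ≤ 𝕜 ∙ x := by
  rintro y ⟨⟨ε, hε, h⟩, hyL⟩
  have hsub : x - ε • y ∈ K := by
    simpa [sub_eq_add_neg] using h (-ε) (by rw [abs_neg, abs_of_pos hε])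
  exact mem_span_singleton_of_isFaceOf_ray hε.ne' hray
    ⟨h ε (abs_of_pos hε).le, L.add_mem hx.2 (L.smul_mem ε hyL)⟩
    ⟨hsub, L.sub_mem hx.2 (L.smul_mem ε hyL)⟩

end ConvexCone

end

theorem stmt17_general {H : Type*} [AddCommGroup H] [Module ℝ H] [FiniteDimensional ℝ H]
    (N : ℕ) (hN : Module.finrank ℝ H = N)
    (K : ConvexCone ℝ H) (L : Submodule ℝ H) (n : ℕ) (hn : Module.finrank ℝ L = n)
    (x : H)
    -- x generates an extreme ray of K' = K ∩ L: the ray through x is a face of K'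
    (hray : IsFaceOf ((K : Set H) ∩ (L : Set H)) {y | ∃ c : ℝ, 0 ≤ c ∧ y = c • x}) :
    Module.finrank ℝ (Submodule.span ℝ
        (⋂₀ {F : Set H | IsFaceOf (K : Set H) F ∧ x ∈ F})) ≤ N - n + 1 := by
  have hx : x ∈ (K : Set H) ∩ L := hray.1 ⟨1, zero_le_one, (one_smul ℝ x).symm⟩
  have hface : IsFaceOf (K : Set H) (K ∩ K.twoSidedDirections hx.1) ∧
      x ∈ (K : Set H) ∩ K.twoSidedDirections hx.1 :=
    ⟨K.isFaceOf_inter_twoSidedDirections hx.1, hx.1, K.self_mem_twoSidedDirections hx.1⟩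
  have hminimal : span ℝ (⋂₀ {F : Set H | IsFaceOf (K : Set H) F ∧ x ∈ F}) ≤
      K.twoSidedDirections hx.1 :=
    span_le.2 <| (Set.sInter_subset_of_mem hface).trans Set.inter_subset_right
  have := finrank_add_finrank_le_of_inf_le_span_singleton
    ((inf_le_inf_right L hminimal).trans (K.twoSidedDirections_inf_le_span_singleton L hx hray))
  omega

theorem stmt17 {H : Type*} [AddCommGroup H] [Module ℝ H] [FiniteDimensional ℝ H]
    (N : ℕ) (hN : Module.finrank ℝ H = N)
    (K : ConvexCone ℝ H) (L : Submodule ℝ H) (n : ℕ) (hn : Module.finrank ℝ L = n)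
    (x : H) (hx0 : x ≠ 0) (hxK : x ∈ K) (hxL : x ∈ L)
    -- x generates an extreme ray of K' = K ∩ L: the ray through x is a face of K'
    (hray : IsFaceOf ((K : Set H) ∩ (L : Set H)) {y | ∃ c : ℝ, 0 ≤ c ∧ y = c • x}) :
    Module.finrank ℝ (Submodule.span ℝ
        (⋂₀ {F : Set H | IsFaceOf (K : Set H) F ∧ x ∈ F})) ≤ N - n + 1 :=
  stmt17_general N hN K L n hn x hray
end

section
/- Let H ⊆ L be subspaces of ℂ^k, let L̄ = { conj(h) : h ∈ L } and similarly H̄, and let Y : H → L̄ be a ℂ-linear isometry such that the compression P_{H̄} Y : H → H̄ is symmetric (i.e., hᵀ(Yg) = gᵀ(Yh) for all g, h ∈ H, identifying vectors with their coordinates). Then there exists a ℂ-linear map Ỹ : L → L̄ that is unitary, symmetric (hᵀ(Ỹg) = gᵀ(Ỹh) for all g, h ∈ L), and extends Y (Ỹ|_H = Y). -/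
/-!
Write `J h = conj (Y h)`. The real subspace `{h + J h : h ∈ H}` of `L` is totally real (the
Hermitian product is real on it), because `Y` preserves inner products on `H` and `hᵀ Y g` is
symmetric in `g, h`. A real orthonormal basis of it is then complex orthonormal; extend it to an
orthonormal basis `b` of `L` and let `C` be the antiunitary involution of `L` fixing `b`. The map
`Z = conj ∘ C ∘ P_L` is unitary from `L` onto `conj L`, symmetric because `⟪C g, h⟫ = ⟪C h, g⟫`,
and agrees with `conj` on the real span of `b`. Evaluating this at `h + J h` and at
`i h + J (i h) = i (h - J h)` gives `Z h = Y h`.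
-/

open scoped InnerProductSpace

theorem LinearMap.inner_map_map_of_norm_map {𝕜 E F : Type*} [RCLike 𝕜] [NormedAddCommGroup E]
    [InnerProductSpace 𝕜 E] [NormedAddCommGroup F] [InnerProductSpace 𝕜 F] (f : E →ₗ[𝕜] F)
    {p : Submodule 𝕜 E} (hf : ∀ x ∈ p, ‖f x‖ = ‖x‖) {x y : E} (hx : x ∈ p) (hy : y ∈ p) :
    ⟪f x, f y⟫_𝕜 = ⟪x, y⟫_𝕜 :=
  ({ toLinearMap := f ∘ₗ p.subtype, norm_map' := fun x => hf x x.2 } : p →ₗᵢ[𝕜] F).inner_map_map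
    ⟨x, hx⟩ ⟨y, hy⟩

section TotallyReal

variable {V : Type*} [NormedAddCommGroup V] [InnerProductSpace ℂ V]

theorem im_inner_eq_zero_of_mem_span {s : Set V} (hs : ∀ x ∈ s, ∀ y ∈ s, (⟪x, y⟫_ℂ).im = 0)
    {x y : V} (hx : x ∈ Submodule.span ℝ s) (hy : y ∈ Submodule.span ℝ s) :
    (⟪x, y⟫_ℂ).im = 0 := by
  induction hx, hy using Submodule.span_induction₂ with
  | mem_mem x y hx hy => exact hs x hx y hy
  | zero_left => simp
  | zero_right => simp
  | add_left x y z _ _ _ h₁ h₂ => rw [inner_add_left, Complex.add_im, h₁, h₂, add_zero]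
  | add_right x y z _ _ _ h₁ h₂ => rw [inner_add_right, Complex.add_im, h₁, h₂, add_zero]
  | smul_left r x y _ _ h =>
    rw [RCLike.real_smul_eq_coe_smul (K := ℂ), inner_smul_left]
    simp [h]
  | smul_right r x y _ _ h =>
    rw [RCLike.real_smul_eq_coe_smul (K := ℂ), inner_smul_right]
    simp [h]

theorem exists_orthonormalBasis_subset_span_real [FiniteDimensional ℂ V] {s : Set V}
    (hs : ∀ x ∈ s, ∀ y ∈ s, (⟪x, y⟫_ℂ).im = 0) :
    ∃ (u : Finset V) (b : OrthonormalBasis u ℂ V), s ⊆ Submodule.span ℝ (Set.range b) := by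
  let := InnerProductSpace.complexToReal (G := V)
  have : FiniteDimensional ℝ V := Module.Finite.trans ℂ V
  set S := Submodule.span ℝ s
  let v := stdOrthonormalBasis ℝ S
  let w i := (v i : V)
  have hw : Orthonormal ℂ w := by
    have hre := orthonormal_iff_ite.mp (v.orthonormal.comp_linearIsometry S.subtypeₗᵢ)
    refine orthonormal_iff_ite.mpr fun i j => Complex.ext ?_ ?_
    · rw [apply_ite Complex.re, Complex.one_re, Complex.zero_re]
      exact hre i j
    · rw [apply_ite Complex.im, Complex.one_im, Complex.zero_im, ite_self]
      exact im_inner_eq_zero_of_mem_span hs (v i).2 (v j).2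
  obtain ⟨u, b, hwu, hb⟩ := ((orthonormal_subtype_range hw.linearIndependent.injective).mpr
    hw).exists_orthonormalBasis_extension
  have hSw : S = Submodule.span ℝ (Set.range w) := by
    rw [Set.range_comp', ← S.coe_subtype, Submodule.span_image, ← OrthonormalBasis.coe_toBasis,
      v.toBasis.span_eq, Submodule.map_subtype_top]
  refine ⟨u, b, fun x hx => ?_⟩
  have hxS : x ∈ S := Submodule.subset_span hx
  rw [hSw] at hxS
  rw [hb, Subtype.range_coe]
  exact Submodule.span_mono hwu hxS

end TotallyReal

namespace EuclideanSpace

variable {ι : Type*}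

def conj : EuclideanSpace ℂ ι →ₗ⋆[ℂ] EuclideanSpace ℂ ι where
  toFun x := WithLp.toLp 2 (star x.ofLp)
  map_add' x y := by ext; simp
  map_smul' c x := by ext; simp

@[simp]
theorem conj_apply (x : EuclideanSpace ℂ ι) (i : ι) : conj x i = star (x i) := rfl

@[simp]
theorem conj_conj (x : EuclideanSpace ℂ ι) : conj (conj x) = x := by ext; simp

theorem conj_single [DecidableEq ι] (i : ι) : conj (single i (1 : ℂ)) = single i 1 := by
  ext j
  by_cases h : j = i <;> simp [h]

theorem eq_of_map_add_conj_eq_conj (Z Y : EuclideanSpace ℂ ι →ₗ[ℂ] EuclideanSpace ℂ ι)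
    {h : EuclideanSpace ℂ ι} (h₁ : Z (h + conj (Y h)) = conj (h + conj (Y h)))
    (h₂ : Z (Complex.I • h + conj (Y (Complex.I • h))) =
      conj (Complex.I • h + conj (Y (Complex.I • h)))) :
    Z h = Y h := by
  simp only [map_add, map_smul, map_smulₛₗ, map_neg, conj_conj, Complex.conj_I, neg_neg] at h₁ h₂
  have h : (2 * Complex.I) • Z h = (2 * Complex.I) • Y h := by
    linear_combination (norm := module) Complex.I • h₁ + h₂
  exact smul_right_injective _ (by simp) h

variable [Fintype ι]

theorem inner_conj_left (x y : EuclideanSpace ℂ ι) : ⟪conj x, y⟫_ℂ = ∑ i, x i * y i := by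
  simp [PiLp.inner_apply, mul_comm]

theorem inner_conj_left_comm (x y : EuclideanSpace ℂ ι) : ⟪conj x, y⟫_ℂ = ⟪conj y, x⟫_ℂ := by
  simp only [inner_conj_left, mul_comm]

theorem inner_conj_conj (x y : EuclideanSpace ℂ ι) : ⟪conj x, conj y⟫_ℂ = ⟪y, x⟫_ℂ := by
  simp [PiLp.inner_apply, mul_comm]

@[simp]
theorem norm_conj (x : EuclideanSpace ℂ ι) : ‖conj x‖ = ‖x‖ := by
  simp [EuclideanSpace.norm_eq]

theorem norm_sq_eq_sum_normSq (x : EuclideanSpace ℂ ι) :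
    ‖x‖ ^ 2 = ∑ i, Complex.normSq (x i) := by
  simp [EuclideanSpace.norm_sq_eq, Complex.sq_norm]

theorem im_inner_add_conj_map_eq_zero (Y : EuclideanSpace ℂ ι →ₗ[ℂ] EuclideanSpace ℂ ι)
    {g h : EuclideanSpace ℂ ι} (hinner : ⟪Y h, Y g⟫_ℂ = ⟪h, g⟫_ℂ)
    (hsym : ⟪conj h, Y g⟫_ℂ = ⟪conj g, Y h⟫_ℂ) :
    (⟪g + conj (Y g), h + conj (Y h)⟫_ℂ).im = 0 := by
  have h₁ : ⟪conj (Y g), conj (Y h)⟫_ℂ = starRingEnd ℂ ⟪g, h⟫_ℂ := by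
    rw [inner_conj_conj, hinner, inner_conj_symm]
  have h₂ : ⟪conj (Y g), h⟫_ℂ = ⟪conj g, Y h⟫_ℂ := by rw [inner_conj_left_comm, hsym]
  have h₃ : ⟪g, conj (Y h)⟫_ℂ = starRingEnd ℂ ⟪conj g, Y h⟫_ℂ := by
    rw [← inner_conj_symm, inner_conj_left_comm]
  rw [inner_add_left, inner_add_right, inner_add_right, h₁, h₂, h₃]
  simp only [Complex.add_im, Complex.conj_im]
  ring

end EuclideanSpace

namespace OrthonormalBasis

section Conj

variable {ι V : Type*} [Fintype ι] [NormedAddCommGroup V] [InnerProductSpace ℂ V]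
  (b : OrthonormalBasis ι ℂ V)

noncomputable def conj : V →ₗ⋆[ℂ] V :=
  b.repr.symm.toLinearMap ∘ₛₗ EuclideanSpace.conj ∘ₛₗ b.repr.toLinearMap

theorem conj_apply (x : V) : b.conj x = b.repr.symm (EuclideanSpace.conj (b.repr x)) := rfl

@[simp]
theorem conj_conj (x : V) : b.conj (b.conj x) = x := by simp [conj_apply]

@[simp]
theorem norm_conj (x : V) : ‖b.conj x‖ = ‖x‖ := by simp [conj_apply]

theorem inner_conj_left_comm (x y : V) : ⟪b.conj x, y⟫_ℂ = ⟪b.conj y, x⟫_ℂ := by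
  simp only [conj_apply, LinearIsometryEquiv.inner_map_eq_flip]
  exact EuclideanSpace.inner_conj_left_comm _ _

theorem conj_eq_self_of_mem_span {x : V} (hx : x ∈ Submodule.span ℝ (Set.range b)) :
    b.conj x = x := by
  classical
  induction hx using Submodule.span_induction with
  | mem _ h =>
    obtain ⟨i, rfl⟩ := h
    simp [conj_apply, EuclideanSpace.conj_single]
  | zero => simp
  | add x y _ _ hx hy => rw [map_add, hx, hy]
  | smul r x _ hx =>
    rw [RCLike.real_smul_eq_coe_smul (K := ℂ), map_smulₛₗ, hx]
    simp

end Conj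

section SymmetricUnitary

variable {ι J : Type*} [Fintype ι] [Fintype J] {L : Submodule ℂ (EuclideanSpace ℂ ι)}
  (b : OrthonormalBasis J ℂ L)

noncomputable def symmetricUnitary : EuclideanSpace ℂ ι →ₗ[ℂ] EuclideanSpace ℂ ι :=
  EuclideanSpace.conj ∘ₛₗ L.subtype ∘ₛₗ b.conj ∘ₛₗ (L.orthogonalProjectionOnto : _ →ₗ[ℂ] L)

theorem symmetricUnitary_coe (x : L) :
    b.symmetricUnitary x = EuclideanSpace.conj (b.conj x : EuclideanSpace ℂ ι) := by
  simp [symmetricUnitary]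

theorem conj_symmetricUnitary_mem (x : EuclideanSpace ℂ ι) :
    EuclideanSpace.conj (b.symmetricUnitary x) ∈ L := by
  simp [symmetricUnitary]

theorem norm_symmetricUnitary {x : EuclideanSpace ℂ ι} (hx : x ∈ L) :
    ‖b.symmetricUnitary x‖ = ‖x‖ := by
  rw [b.symmetricUnitary_coe ⟨x, hx⟩, EuclideanSpace.norm_conj]
  exact b.norm_conj ⟨x, hx⟩

theorem exists_symmetricUnitary_eq {w : EuclideanSpace ℂ ι} (hw : EuclideanSpace.conj w ∈ L) :
    ∃ x ∈ L, b.symmetricUnitary x = w :=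
  ⟨_, (b.conj ⟨_, hw⟩).2, by rw [b.symmetricUnitary_coe (b.conj ⟨_, hw⟩)]; simp⟩

theorem inner_conj_symmetricUnitary_comm {g h : EuclideanSpace ℂ ι} (hg : g ∈ L) (hh : h ∈ L) :
    ⟪EuclideanSpace.conj h, b.symmetricUnitary g⟫_ℂ =
      ⟪EuclideanSpace.conj g, b.symmetricUnitary h⟫_ℂ := by
  rw [b.symmetricUnitary_coe ⟨g, hg⟩, b.symmetricUnitary_coe ⟨h, hh⟩,
    EuclideanSpace.inner_conj_conj, EuclideanSpace.inner_conj_conj]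
  exact b.inner_conj_left_comm ⟨g, hg⟩ ⟨h, hh⟩

theorem symmetricUnitary_eq_conj_of_mem_span {x : L}
    (hx : x ∈ Submodule.span ℝ (Set.range b)) :
    b.symmetricUnitary x = EuclideanSpace.conj (x : EuclideanSpace ℂ ι) := by
  rw [b.symmetricUnitary_coe, b.conj_eq_self_of_mem_span hx]

end SymmetricUnitary

end OrthonormalBasis

open EuclideanSpace in
theorem EuclideanSpace.exists_symmetric_unitary_extension {ι : Type*} [Fintype ι]
    {H L : Submodule ℂ (EuclideanSpace ℂ ι)} (hHL : H ≤ L)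
    (Y : EuclideanSpace ℂ ι →ₗ[ℂ] EuclideanSpace ℂ ι) (hYrange : ∀ h ∈ H, conj (Y h) ∈ L)
    (hYiso : ∀ h ∈ H, ‖Y h‖ = ‖h‖)
    (hYsym : ∀ g ∈ H, ∀ h ∈ H, ⟪conj h, Y g⟫_ℂ = ⟪conj g, Y h⟫_ℂ) :
    ∃ Z : EuclideanSpace ℂ ι →ₗ[ℂ] EuclideanSpace ℂ ι,
      (∀ x ∈ L, conj (Z x) ∈ L) ∧ (∀ x ∈ L, ‖Z x‖ = ‖x‖) ∧
      (∀ w, conj w ∈ L → ∃ x ∈ L, Z x = w) ∧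
      (∀ g ∈ L, ∀ h ∈ L, ⟪conj h, Z g⟫_ℂ = ⟪conj g, Z h⟫_ℂ) ∧ ∀ h ∈ H, Z h = Y h := by
  let ψ : H → L := fun h => ⟨h + conj (Y h), L.add_mem (hHL h.2) (hYrange h h.2)⟩
  obtain ⟨u, b, hb⟩ := exists_orthonormalBasis_subset_span_real (s := Set.range ψ) <| by
    rintro _ ⟨g, rfl⟩ _ ⟨h, rfl⟩
    exact im_inner_add_conj_map_eq_zero Y (Y.inner_map_map_of_norm_map hYiso h.2 g.2)
      (hYsym g g.2 h h.2)
  have hψ (h : H) : b.symmetricUnitary (ψ h) = conj (ψ h) :=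
    b.symmetricUnitary_eq_conj_of_mem_span (hb ⟨h, rfl⟩)
  exact ⟨b.symmetricUnitary, fun x _ => b.conj_symmetricUnitary_mem x,
    fun x hx => b.norm_symmetricUnitary hx, fun w hw => b.exists_symmetricUnitary_eq hw,
    fun g hg h hh => b.inner_conj_symmetricUnitary_comm hg hh,
    fun h hh => eq_of_map_add_conj_eq_conj _ Y (hψ ⟨h, hh⟩) (hψ ⟨Complex.I • h, H.smul_mem _ hh⟩)⟩
theorem stmt19 (k : ℕ) (H L : Submodule ℂ (Fin k → ℂ)) (hHL : H ≤ L)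
    (Y : (Fin k → ℂ) →ₗ[ℂ] (Fin k → ℂ))
    -- Y maps H into the conjugate of L
    (hYrange : ∀ h ∈ H, (fun i => star (Y h i)) ∈ L)
    -- Y is an isometry on H
    (hYiso : ∀ h ∈ H, ∑ i, Complex.normSq (Y h i) = ∑ i, Complex.normSq (h i))
    -- the compression of Y to the conjugate of H is symmetric
    (hYsym : ∀ g ∈ H, ∀ h ∈ H, ∑ i, h i * Y g i = ∑ i, g i * Y h i) :
    ∃ Z : (Fin k → ℂ) →ₗ[ℂ] (Fin k → ℂ),
      -- Z maps L into the conjugate of L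
      (∀ x ∈ L, (fun i => star (Z x i)) ∈ L) ∧
      -- Z is an isometry on L
      (∀ x ∈ L, ∑ i, Complex.normSq (Z x i) = ∑ i, Complex.normSq (x i)) ∧
      -- Z maps L onto the conjugate of L
      (∀ w : Fin k → ℂ, (fun i => star (w i)) ∈ L → ∃ x ∈ L, Z x = w) ∧
      -- Z is symmetric on L
      (∀ g ∈ L, ∀ h ∈ L, ∑ i, h i * Z g i = ∑ i, g i * Z h i) ∧
      -- Z extends Y
      (∀ h ∈ H, Z h = Y h) := by
  let e := WithLp.linearEquiv 2 ℂ (Fin k → ℂ)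
  obtain ⟨Z, hZrange, hZiso, hZonto, hZsym, hZY⟩ :=
    EuclideanSpace.exists_symmetric_unitary_extension (H := H.comap e.toLinearMap)
      (L := L.comap e.toLinearMap) (Submodule.comap_mono hHL) (e.symm.conj Y)
      (fun h hh => hYrange (e h) hh)
      (fun h hh => by
        rw [← sq_eq_sq₀ (norm_nonneg _) (norm_nonneg _), EuclideanSpace.norm_sq_eq_sum_normSq,
          EuclideanSpace.norm_sq_eq_sum_normSq]
        exact hYiso (e h) hh)
      (fun g hg h hh => by
        rw [EuclideanSpace.inner_conj_left, EuclideanSpace.inner_conj_left]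
        exact hYsym (e g) hg (e h) hh)
  refine ⟨e.conj Z, fun x hx => hZrange _ hx, fun x hx => ?_, fun w hw => ?_,
    fun g hg h hh => ?_, fun h hh => congrArg e (hZY _ hh)⟩
  · have := congrArg (· ^ 2) (hZiso (WithLp.toLp 2 x) hx)
    simp only [EuclideanSpace.norm_sq_eq_sum_normSq] at this
    exact this
  · obtain ⟨x, hx, hZx⟩ := hZonto (WithLp.toLp 2 w) hw
    refine ⟨e x, hx, ?_⟩
    rw [LinearEquiv.conj_apply_apply, e.symm_apply_apply, hZx]
    rfl
  · have := hZsym (WithLp.toLp 2 g) hg (WithLp.toLp 2 h) hh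
    rw [EuclideanSpace.inner_conj_left, EuclideanSpace.inner_conj_left] at this
    exact this
end
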